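/- arXiv:2507.15449 — 8 statements merged into one kernel-verified Lean document; each statement's English description precedes it below -/
import Mathlib

section
/- Let u = U_i(x−𝔮(y), y) be a component of the substituted system. Then there exist homogeneous polynomials h₁, …, h_t ∈ 𝔽_q[x,y] of degree 1 such that the homogeneous component of degree 3 of u equals Σ_{j=1}^t 𝔮_j^{(2)} h_j, where 𝔮_j^{(2)} denotes the homogeneous component of degree 2 of 𝔮_j. -/
open MvPolynomial Finset

namespace Stmt3Aux

variable {K : Type*} [Field K] {σ : Type*}

lemma hc_of_hom {p : MvPolynomial σ K} {m n : ℕ} (h : p.IsHomogeneous m) :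
    homogeneousComponent n p = if n = m then p else 0 :=
  homogeneousComponent_of_mem ((mem_homogeneousSubmodule _ _).2 h)

lemma sum3 {p : MvPolynomial σ K} (hp : p.totalDegree ≤ 2) :
    ∑ i ∈ Finset.range 3, homogeneousComponent i p = p := by
  ext d
  simp only [coeff_sum, coeff_homogeneousComponent]
  rw [Finset.sum_ite_eq (Finset.range 3) d.degree (fun _ => coeff d p)]
  by_cases h3 : d.degree ∈ Finset.range 3
  · rw [if_pos h3]
  · rw [if_neg h3]
    have : p.totalDegree < ∑ i ∈ d.support, d i := by
      have h4 : 3 ≤ d.degree := by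
        simpa [Finset.mem_range, not_lt] using h3
      have : d.degree = ∑ i ∈ d.support, d i := rfl
      omega
    exact (coeff_eq_zero_of_totalDegree_lt this).symm

lemma hc3_mul {p q : MvPolynomial σ K} (hp : p.totalDegree ≤ 2) (hq : q.totalDegree ≤ 2) :
    homogeneousComponent 3 (p * q) =
      homogeneousComponent 1 p * homogeneousComponent 2 q +
      homogeneousComponent 2 p * homogeneousComponent 1 q := by
  conv_lhs => rw [← sum3 hp, ← sum3 hq]
  rw [Finset.sum_mul_sum, map_sum]
  have key : ∀ i j : ℕ,
      homogeneousComponent 3 (homogeneousComponent i p * homogeneousComponent j q)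
        = if (3 : ℕ) = i + j then homogeneousComponent i p * homogeneousComponent j q
          else 0 := fun i j =>
    hc_of_hom ((homogeneousComponent_isHomogeneous i p).mul
      (homogeneousComponent_isHomogeneous j q))
  simp only [map_sum, key]
  simp only [Finset.sum_range_succ, Finset.sum_range_zero]
  norm_num

/-- The substitution map. -/
noncomputable def phi {n t : ℕ} (Q : Fin t → MvPolynomial (Fin n) K) : Fin n → MvPolynomial (Fin n) K :=
  fun k => if hk : (k : ℕ) < t then X k - Q ⟨(k : ℕ), hk⟩ else X k

variable {n t : ℕ} (Q : Fin t → MvPolynomial (Fin n) K)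

lemma phi_deg (hQdeg : ∀ j, (Q j).totalDegree ≤ 2) (k : Fin n) :
    (phi Q k).totalDegree ≤ 2 := by
  unfold phi
  split_ifs with hk
  · refine (totalDegree_sub _ _).trans ?_
    simp only [totalDegree_X, max_le_iff]
    exact ⟨one_le_two, hQdeg _⟩
  · simp [totalDegree_X]

lemma hc2_phi_pos (k : Fin n) (hk : (k : ℕ) < t) :
    homogeneousComponent 2 (phi Q k) = - homogeneousComponent 2 (Q ⟨(k : ℕ), hk⟩) := by
  unfold phi
  rw [dif_pos hk, map_sub, hc_of_hom (isHomogeneous_X K k), if_neg (by norm_num), zero_sub]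

lemma hc2_phi_neg (k : Fin n) (hk : ¬ (k : ℕ) < t) :
    homogeneousComponent 2 (phi Q k) = 0 := by
  unfold phi
  rw [dif_neg hk, hc_of_hom (isHomogeneous_X K k), if_neg (by norm_num)]

lemma key_sum (a : Fin n) (r : MvPolynomial (Fin n) K) :
    ∑ j : Fin t, homogeneousComponent 2 (Q j) * (if (j : ℕ) = (a : ℕ) then -r else 0)
      = homogeneousComponent 2 (phi Q a) * r := by
  by_cases ha : (a : ℕ) < t
  · rw [Finset.sum_eq_single (⟨(a : ℕ), ha⟩ : Fin t)]
    · rw [if_pos rfl, hc2_phi_pos Q a ha]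
      ring
    · intro j _ hj
      have hne : ¬ ((j : ℕ) = (a : ℕ)) := fun hja => hj (Fin.ext hja)
      rw [if_neg hne, mul_zero]
    · intro h; exact absurd (Finset.mem_univ _) h
  · rw [hc2_phi_neg Q a ha, zero_mul]
    refine Finset.sum_eq_zero fun j _ => ?_
    have hne : ¬ ((j : ℕ) = (a : ℕ)) := fun hja => ha (hja ▸ j.isLt)
    rw [if_neg hne, mul_zero]

theorem main (hQdeg : ∀ j, (Q j).totalDegree ≤ 2)
    (P : MvPolynomial (Fin n) K) (hP : P.totalDegree ≤ 2) :
    ∃ h : Fin t → MvPolynomial (Fin n) K,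
      (∀ j, (h j).IsHomogeneous 1) ∧
      homogeneousComponent 3 (aeval (phi Q) P)
        = ∑ j : Fin t, homogeneousComponent 2 (Q j) * h j := by
  set Pred : MvPolynomial (Fin n) K → Prop := fun p =>
    ∃ h : Fin t → MvPolynomial (Fin n) K,
      (∀ j, (h j).IsHomogeneous 1) ∧
      homogeneousComponent 3 (aeval (phi Q) p)
        = ∑ j : Fin t, homogeneousComponent 2 (Q j) * h j with hPred
  have hzero : Pred 0 := ⟨0, fun j => isHomogeneous_zero _ _ _, by simp⟩
  have hadd : ∀ p q, Pred p → Pred q → Pred (p + q) := by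
    rintro p q ⟨hp, hp1, hp2⟩ ⟨hq, hq1, hq2⟩
    refine ⟨hp + hq, fun j => (hp1 j).add (hq1 j), ?_⟩
    rw [map_add, map_add, hp2, hq2, ← Finset.sum_add_distrib]
    simp [mul_add]
  have hmono : ∀ (d : Fin n →₀ ℕ), (d.sum fun _ e => e) ≤ 2 → ∀ c : K,
      Pred (monomial d c) := by
    intro d hd c
    have hdeg : (aeval (phi Q) (monomial d c)).totalDegree ≤ 2 * (d.sum fun _ e => e) := by
      rw [aeval_monomial]
      refine (totalDegree_mul _ _).trans ?_
      have h1 : (algebraMap K (MvPolynomial (Fin n) K) c).totalDegree = 0 := totalDegree_C _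
      rw [h1, zero_add]
      refine (totalDegree_finset_prod _ _).trans ?_
      rw [Finsupp.sum, Finset.mul_sum]
      refine Finset.sum_le_sum fun k _ => ?_
      refine (totalDegree_pow _ _).trans ?_
      calc d k * (phi Q k).totalDegree ≤ d k * 2 :=
            Nat.mul_le_mul_left _ (phi_deg Q hQdeg k)
        _ = 2 * d k := Nat.mul_comm _ _
    rcases Nat.lt_or_ge (d.sum fun _ e => e) 2 with hlt | hge
    · refine ⟨0, fun j => isHomogeneous_zero _ _ _, ?_⟩
      rw [homogeneousComponent_eq_zero]
      · simp
      · omega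
    · have hsum2 : (d.sum fun _ e => e) = 2 := le_antisymm hd hge
      have hcard : Multiset.card d.toMultiset = 2 := by
        rw [Finsupp.card_toMultiset]; exact hsum2
      obtain ⟨a, b, hab⟩ := Multiset.card_eq_two.mp hcard
      have hd2 : d = Finsupp.single a 1 + Finsupp.single b 1 := by
        have h0 := Finsupp.toMultiset_toFinsupp d
        rw [hab] at h0
        rw [← h0]
        simp [Multiset.insert_eq_cons, ← Multiset.singleton_add, map_add,
          Multiset.toFinsupp_singleton]
      have hmon : monomial d c = C c * (X a * X b) := by
        rw [hd2, X, X, monomial_mul, one_mul, C_mul_monomial, mul_one]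
      refine ⟨fun j => C c * ((if (j : ℕ) = (a : ℕ)
            then -homogeneousComponent 1 (phi Q b) else 0)
          + (if (j : ℕ) = (b : ℕ) then -homogeneousComponent 1 (phi Q a) else 0)),
        fun j => ?_, ?_⟩
      · refine IsHomogeneous.C_mul (IsHomogeneous.add ?_ ?_) c <;>
        · split_ifs
          · exact (homogeneousComponent_isHomogeneous 1 _).neg
          · exact isHomogeneous_zero _ _ _
      · rw [hmon]
        rw [show (aeval (phi Q)) (C c * (X a * X b)) = C c * (phi Q a * phi Q b) by
          simp [algebraMap_eq]]
        rw [homogeneousComponent_C_mul,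
          hc3_mul (phi_deg Q hQdeg a) (phi_deg Q hQdeg b)]
        have expand : ∀ j : Fin t,
            homogeneousComponent 2 (Q j) * (C c * ((if (j : ℕ) = (a : ℕ)
                then -homogeneousComponent 1 (phi Q b) else 0)
              + (if (j : ℕ) = (b : ℕ) then -homogeneousComponent 1 (phi Q a) else 0)))
            = C c * (homogeneousComponent 2 (Q j) * (if (j : ℕ) = (a : ℕ)
                then -homogeneousComponent 1 (phi Q b) else 0)
              + homogeneousComponent 2 (Q j) * (if (j : ℕ) = (b : ℕ)
                then -homogeneousComponent 1 (phi Q a) else 0)) := fun j => by ring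
        simp only [expand]
        rw [← Finset.mul_sum, Finset.sum_add_distrib, key_sum Q a, key_sum Q b]
        ring
  have := P.as_sum
  rw [this]
  exact Finset.sum_induction _ Pred hadd hzero fun d hdmem =>
    hmono d ((le_totalDegree hdmem).trans hP) _

end Stmt3Aux

/-- there exist homogeneous linear polynomials `h_1, …, h_t` such that the
degree-3 homogeneous component of `u = U_i(x - q(y), y)` equals `∑_j q_j^{(2)} h_j`. -/
theorem stmt_3 {K : Type*} [Field K] [Fintype K] {n m t : ℕ}
    (ht : 0 < t) (htn : t < n) (htm : t ≤ m)
    (Q : Fin t → MvPolynomial (Fin n) K)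
    (hQdeg : ∀ j, (Q j).totalDegree ≤ 2)
    (hQvars : ∀ j, ∀ i ∈ (Q j).vars, t ≤ (i : ℕ))
    (U : Fin (m - t) → MvPolynomial (Fin n) K)
    (hUdeg : ∀ i, (U i).totalDegree ≤ 2)
    (i : Fin (m - t)) :
    ∃ h : Fin t → MvPolynomial (Fin n) K,
      (∀ j, (h j).IsHomogeneous 1) ∧
      homogeneousComponent 3
          (aeval (fun k : Fin n => if hk : (k : ℕ) < t then X k - Q ⟨(k : ℕ), hk⟩ else X k) (U i))
        = ∑ j : Fin t, homogeneousComponent 2 (Q j) * h j :=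
  Stmt3Aux.main Q hQdeg (U i) (hUdeg i)
end

section
/- Let u = U_i(x−𝔮(y), y) be a component of the substituted system, and write u^{(4)}, u^{(3)} for its homogeneous components of degrees 4 and 3. Then there exist polynomials p₁, …, p_t of total degree at most 2 such that u^{(4)} + u^{(3)} = Σ_{j=1}^t p_j 𝔮_j^{(2)}, and moreover each p_j can be written as p_j = ℓ_j + Σ_{k=1}^t c_{jk}·(x_k − 𝔮_k(y)) for some polynomial ℓ_j of total degree at most 1 and scalars c_{jk} ∈ 𝔽_q. -/
open MvPolynomial Finset

open MvPolynomial Finset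

namespace Stmt4Aux

variable {R : Type*} [CommRing R] {σ : Type*}

lemma decomp3 (f : MvPolynomial σ R) (hf : f.totalDegree ≤ 2) :
    f = homogeneousComponent 0 f + homogeneousComponent 1 f + homogeneousComponent 2 f := by
  have h := sum_homogeneousComponent f
  have hsub : ∑ i ∈ Finset.range (f.totalDegree + 1), homogeneousComponent i f
      = ∑ i ∈ Finset.range 3, homogeneousComponent i f :=
    Finset.sum_subset (Finset.range_subset_range.2 (by omega))
      (fun i hi hni => homogeneousComponent_eq_zero i f
        (by simp only [Finset.mem_range] at hi hni; omega))
  rw [hsub] at h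
  conv_lhs => rw [← h]
  simp [Finset.sum_range_succ]

lemma hom_mul (g q : MvPolynomial σ R) (hq : q.IsHomogeneous 2) (s : ℕ) :
    homogeneousComponent (s + 2) (g * q) = homogeneousComponent s g * q := by
  conv_lhs => rw [← sum_homogeneousComponent g, Finset.sum_mul]
  rw [map_sum]
  have hterm : ∀ i : ℕ, homogeneousComponent (s + 2) (homogeneousComponent i g * q)
      = if i = s then homogeneousComponent i g * q else 0 := by
    intro i
    have hmem : homogeneousComponent i g * q ∈ homogeneousSubmodule σ R (i + 2) :=
      (mem_homogeneousSubmodule _ _).2 ((homogeneousComponent_isHomogeneous i g).mul hq)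
    rw [homogeneousComponent_of_mem hmem]
    by_cases his : i = s
    · rw [if_pos (by omega : s + 2 = i + 2), if_pos his]
    · rw [if_neg (by omega : ¬ s + 2 = i + 2), if_neg his]
  rw [Finset.sum_congr rfl fun i _ => hterm i,
    Finset.sum_ite_eq' (Finset.range (g.totalDegree + 1)) s
      (fun i => homogeneousComponent i g * q)]
  by_cases hs : s ∈ Finset.range (g.totalDegree + 1)
  · rw [if_pos hs]
  · rw [if_neg hs, homogeneousComponent_eq_zero s g
      (by simp only [Finset.mem_range] at hs; omega), zero_mul]

lemma fsum_zero (d : σ →₀ ℕ) (h : (d.sum fun _ e => e) = 0) : d = 0 := by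
  ext x
  by_cases hx : x ∈ d.support
  · rw [Finsupp.sum] at h
    exact Finset.sum_eq_zero_iff.mp h x hx
  · simpa [Finsupp.notMem_support_iff] using hx

lemma extract (d : σ →₀ ℕ) (h : d ≠ 0) :
    ∃ (a : σ) (d' : σ →₀ ℕ), d = Finsupp.single a 1 + d' ∧
      (d.sum fun _ e => e) = (d'.sum fun _ e => e) + 1 := by
  obtain ⟨a, ha⟩ : ∃ a, d a ≠ 0 := by
    by_contra hc; push_neg at hc; exact h (Finsupp.ext hc)
  have hd : d = Finsupp.single a 1 + (d - Finsupp.single a 1) := by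
    ext x
    simp only [Finsupp.coe_add, Pi.add_apply, Finsupp.coe_tsub, Pi.sub_apply,
      Finsupp.single_apply]
    by_cases hx : a = x
    · subst hx; simp; omega
    · simp [hx]
  refine ⟨a, d - Finsupp.single a 1, hd, ?_⟩
  conv_lhs => rw [hd]
  rw [Finsupp.sum_add_index' (fun _ => rfl) (fun _ _ _ => rfl),
    Finsupp.sum_single_index rfl]
  omega

lemma classify (d : σ →₀ ℕ) (hd : (d.sum fun _ e => e) ≤ 2) (c : R) :
    (∃ c', (monomial d c : MvPolynomial σ R) = C c') ∨
    (∃ a c', (monomial d c : MvPolynomial σ R) = C c' * X a) ∨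
    (∃ a b c', (monomial d c : MvPolynomial σ R) = C c' * X a * X b) := by
  by_cases h0 : d = 0
  · exact Or.inl ⟨c, by rw [h0, monomial_zero']⟩
  obtain ⟨a, d', hd1, hs1⟩ := extract d h0
  by_cases h0' : d' = 0
  · refine Or.inr (Or.inl ⟨a, c, ?_⟩)
    rw [hd1, h0', add_zero, C_mul_X_eq_monomial]
  obtain ⟨b, d'', hd2, hs2⟩ := extract d' h0'
  have hz : d'' = 0 := fsum_zero _ (by omega)
  refine Or.inr (Or.inr ⟨a, b, c, ?_⟩)
  have hXb : (X b : MvPolynomial σ R) = monomial (Finsupp.single b 1) 1 := by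
    rw [← X_pow_eq_monomial, pow_one]
  rw [hd1, hd2, hz, add_zero, C_mul_X_eq_monomial, hXb, monomial_mul, mul_one]

end Stmt4Aux

open Stmt4Aux in
/-- writing `u = U_i(x - q(y), y)`, there exist polynomials `p_1, …, p_t` of total
degree at most 2 with `u^{(4)} + u^{(3)} = ∑_j p_j q_j^{(2)}`, and each `p_j` can be written
`p_j = ℓ_j + ∑_k c_{jk} (x_k - q_k(y))` with `deg ℓ_j ≤ 1` and scalars `c_{jk}`. -/
theorem stmt_4 {K : Type*} [Field K] [Fintype K] {n m t : ℕ}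
    (ht : 0 < t) (htn : t < n) (htm : t ≤ m)
    (Q : Fin t → MvPolynomial (Fin n) K)
    (hQdeg : ∀ j, (Q j).totalDegree ≤ 2)
    (hQvars : ∀ j, ∀ i ∈ (Q j).vars, t ≤ (i : ℕ))
    (U : Fin (m - t) → MvPolynomial (Fin n) K)
    (hUdeg : ∀ i, (U i).totalDegree ≤ 2)
    (i : Fin (m - t)) :
    ∃ p : Fin t → MvPolynomial (Fin n) K,
      (∀ j, (p j).totalDegree ≤ 2) ∧
      (homogeneousComponent 4
          (aeval (fun k : Fin n => if hk : (k : ℕ) < t then X k - Q ⟨(k : ℕ), hk⟩ else X k) (U i))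
        + homogeneousComponent 3
          (aeval (fun k : Fin n => if hk : (k : ℕ) < t then X k - Q ⟨(k : ℕ), hk⟩ else X k) (U i))
        = ∑ j : Fin t, p j * homogeneousComponent 2 (Q j)) ∧
      (∀ j, ∃ (ℓ : MvPolynomial (Fin n) K) (c : Fin t → K),
        ℓ.totalDegree ≤ 1 ∧
        p j = ℓ + ∑ k : Fin t, C (c k) * (X (Fin.castLE htn.le k) - Q k)) := by
  classical
  set σf : Fin n → MvPolynomial (Fin n) K :=
    (fun k : Fin n => if hk : (k : ℕ) < t then X k - Q ⟨(k : ℕ), hk⟩ else X k) with hσf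
  set Qf : Fin n → MvPolynomial (Fin n) K :=
    (fun k => if hk : (k : ℕ) < t then Q ⟨(k : ℕ), hk⟩ else 0) with hQf
  set E : Fin n → MvPolynomial (Fin n) K :=
    (fun k => homogeneousComponent 2 (Qf k)) with hE
  set M : Fin n → MvPolynomial (Fin n) K := (fun k => X k - (Qf k - E k)) with hM
  -- basic facts
  have hQfdeg : ∀ k, (Qf k).totalDegree ≤ 2 := by
    intro k; rw [hQf]; dsimp only; split
    · exact hQdeg _
    · simp
  have hQfk : ∀ (k : Fin n) (hk : (k : ℕ) < t), Qf k = Q ⟨(k : ℕ), hk⟩ := by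
    intro k hk; rw [hQf]; dsimp only; rw [dif_pos hk]
  have hQf0 : ∀ (k : Fin n), ¬ ((k : ℕ) < t) → Qf k = 0 := by
    intro k hk; rw [hQf]; dsimp only; rw [dif_neg hk]
  have hEhom : ∀ k, (E k).IsHomogeneous 2 := fun k => homogeneousComponent_isHomogeneous 2 _
  have hEdeg : ∀ k, (E k).totalDegree ≤ 2 := fun k => (hEhom k).totalDegree_le
  have hEQ : ∀ (k : Fin n) (hk : (k : ℕ) < t),
      E k = homogeneousComponent 2 (Q ⟨(k : ℕ), hk⟩) := by
    intro k hk; rw [hE]; dsimp only; rw [hQfk k hk]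
  have hE0 : ∀ (k : Fin n), ¬ ((k : ℕ) < t) → E k = 0 := by
    intro k hk; rw [hE]; dsimp only; rw [hQf0 k hk, map_zero]
  have hMdeg : ∀ k, (M k).totalDegree ≤ 1 := by
    intro k
    have hEk : E k = homogeneousComponent 2 (Qf k) := by rw [hE]
    have hlow : Qf k - E k
        = homogeneousComponent 0 (Qf k) + homogeneousComponent 1 (Qf k) := by
      have h3 := decomp3 (Qf k) (hQfdeg k)
      linear_combination h3 - hEk
    rw [hM]; dsimp only; rw [hlow]
    refine le_trans (totalDegree_sub _ _) (max_le (by simp) ?_)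
    refine le_trans (totalDegree_add _ _) (max_le ?_ ?_)
    · exact le_trans (homogeneousComponent_isHomogeneous 0 (Qf k)).totalDegree_le (by omega)
    · exact (homogeneousComponent_isHomogeneous 1 (Qf k)).totalDegree_le
  have hσME : ∀ k, σf k = M k - E k := by
    intro k
    have : M k - E k = X k - Qf k := by rw [hM]; ring
    rw [this, hσf, hQf]; dsimp only
    by_cases hk : (k : ℕ) < t
    · rw [dif_pos hk, dif_pos hk]
    · rw [dif_neg hk, dif_neg hk, sub_zero]
  have hσdeg : ∀ k, (σf k).totalDegree ≤ 2 := by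
    intro k; rw [hσME k]
    exact le_trans (totalDegree_sub _ _) (max_le (le_trans (hMdeg k) one_le_two) (hEdeg k))
  -- bridge lemma
  have hbridge : ∀ (g : MvPolynomial (Fin n) K) (k : Fin n),
      g * E k = ∑ j : Fin t,
        (if (k : ℕ) = (j : ℕ) then g else 0) * homogeneousComponent 2 (Q j) := by
    intro g k
    by_cases hk : (k : ℕ) < t
    · rw [hEQ k hk, Finset.sum_eq_single (⟨(k : ℕ), hk⟩ : Fin t)]
      · rw [if_pos rfl]
      · intro j _ hj
        rw [if_neg, zero_mul]
        intro hc; exact hj (Fin.ext hc.symm)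
      · intro h; exact absurd (Finset.mem_univ _) h
    · rw [hE0 k hk, mul_zero]
      symm; apply Finset.sum_eq_zero
      intro j _
      rw [if_neg, zero_mul]
      intro hc; exact hk (hc ▸ j.isLt)
  -- shape predicate
  let S : MvPolynomial (Fin n) K → Prop := fun g =>
    ∃ (ℓ : MvPolynomial (Fin n) K) (c : Fin t → K),
      ℓ.totalDegree ≤ 1 ∧
      g = ℓ + ∑ k : Fin t, C (c k) * (X (Fin.castLE htn.le k) - Q k)
  have hS1 : ∀ g : MvPolynomial (Fin n) K, g.totalDegree ≤ 1 → S g := by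
    intro g hg
    exact ⟨g, 0, hg, by simp⟩
  have hSadd : ∀ g h, S g → S h → S (g + h) := by
    rintro g h ⟨ℓ, cc, hl, rfl⟩ ⟨ℓ', cc', hl', rfl⟩
    refine ⟨ℓ + ℓ', fun k => cc k + cc' k,
      le_trans (totalDegree_add _ _) (max_le hl hl'), ?_⟩
    have hsum : ∀ k : Fin t, C (cc k + cc' k) * (X (Fin.castLE htn.le k) - Q k)
        = C (cc k) * (X (Fin.castLE htn.le k) - Q k)
          + C (cc' k) * (X (Fin.castLE htn.le k) - Q k) := by
      intro k; rw [C_add]; ring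
    rw [Finset.sum_congr rfl fun k _ => hsum k, Finset.sum_add_distrib]
    ring
  have hEshape : ∀ (s : K) (k : Fin n), S (C s * E k) := by
    intro s k
    by_cases hk : (k : ℕ) < t
    · refine ⟨C s * M k, fun j => if j = ⟨(k : ℕ), hk⟩ then -s else 0, ?_, ?_⟩
      · exact le_trans (totalDegree_mul _ _) (by simpa using hMdeg k)
      · rw [Finset.sum_eq_single (⟨(k : ℕ), hk⟩ : Fin t)]
        · dsimp only
          rw [if_pos rfl]
          have hX : X (Fin.castLE htn.le (⟨(k : ℕ), hk⟩ : Fin t)) = (X k : MvPolynomial (Fin n) K) := by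
            congr 1
          rw [hX, map_neg]
          have : E k = M k - (X k - Q ⟨(k : ℕ), hk⟩) := by
            rw [hM]; dsimp only; rw [hQfk k hk]; ring
          rw [this]; ring
        · intro j _ hj; dsimp only; rw [if_neg hj, map_zero, zero_mul]
        · intro h; exact absurd (Finset.mem_univ _) h
    · rw [hE0 k hk, mul_zero]
      exact hS1 0 (by simp)
  -- the main predicate
  let P : MvPolynomial (Fin n) K → Prop := fun f =>
    ∃ p : Fin t → MvPolynomial (Fin n) K,
      (∀ j, (p j).totalDegree ≤ 2) ∧
      (homogeneousComponent 4 (aeval σf f) + homogeneousComponent 3 (aeval σf f)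
        = ∑ j : Fin t, p j * homogeneousComponent 2 (Q j)) ∧
      (∀ j, S (p j))
  have hP0 : P 0 := by
    refine ⟨0, by simp, by simp, fun j => hS1 0 (by simp)⟩
  have hPadd : ∀ f g, P f → P g → P (f + g) := by
    rintro f g ⟨p, hp2, hpeq, hps⟩ ⟨p', hp2', hpeq', hps'⟩
    refine ⟨fun j => p j + p' j, ?_, ?_, fun j => hSadd _ _ (hps j) (hps' j)⟩
    · intro j; exact le_trans (totalDegree_add _ _) (max_le (hp2 j) (hp2' j))
    · rw [map_add, map_add, map_add]
      have : ∀ j : Fin t, (p j + p' j) * homogeneousComponent 2 (Q j)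
          = p j * homogeneousComponent 2 (Q j) + p' j * homogeneousComponent 2 (Q j) := by
        intro j; ring
      rw [Finset.sum_congr rfl fun j _ => this j, Finset.sum_add_distrib, ← hpeq, ← hpeq']
      ring
  -- P holds for low-degree values
  have hPlow : ∀ f : MvPolynomial (Fin n) K, (aeval σf f).totalDegree ≤ 2 → P f := by
    intro f hf
    refine ⟨0, by simp, ?_, fun j => hS1 0 (by simp)⟩
    rw [homogeneousComponent_eq_zero 4 _ (by omega), homogeneousComponent_eq_zero 3 _ (by omega)]
    simp
  -- key: monomials
  have key : ∀ (dm : Fin n →₀ ℕ) (cm : K), (dm.sum fun _ e => e) ≤ 2 → P (monomial dm cm) := by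
    intro dm cm hdm
    rcases classify dm hdm cm with ⟨c', hc⟩ | ⟨a, c', hc⟩ | ⟨a, b, c', hc⟩
    · rw [hc]
      apply hPlow
      have : aeval σf (C c' : MvPolynomial (Fin n) K) = C c' := by
        rw [aeval_C, algebraMap_eq]
      rw [this]; simp
    · rw [hc]
      apply hPlow
      have : aeval σf (C c' * X a) = C c' * σf a := by
        rw [map_mul, aeval_C, algebraMap_eq, aeval_X]
      rw [this]
      exact le_trans (totalDegree_mul _ _) (by simpa using hσdeg a)
    · rw [hc]
      have hval : aeval σf (C c' * X a * X b) = C c' * ((M a - E a) * (M b - E b)) := by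
        rw [map_mul, map_mul, aeval_C, algebraMap_eq, aeval_X, aeval_X, hσME a, hσME b]
        ring
      set ga : MvPolynomial (Fin n) K := -(C c' * homogeneousComponent 1 (M b)) with hga
      set gb : MvPolynomial (Fin n) K :=
        C c' * E a - C c' * homogeneousComponent 1 (M a) with hgb
      have hgadeg : ga.totalDegree ≤ 1 := by
        rw [hga, totalDegree_neg]
        exact le_trans (totalDegree_mul _ _)
          (by simpa using (homogeneousComponent_isHomogeneous 1 (M b)).totalDegree_le)
      have hgbdeg : gb.totalDegree ≤ 2 := by
        rw [hgb]
        refine le_trans (totalDegree_sub _ _) (max_le ?_ ?_)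
        · exact le_trans (totalDegree_mul _ _) (by simpa using hEdeg a)
        · refine le_trans (totalDegree_mul _ _) ?_
          have := (homogeneousComponent_isHomogeneous 1 (M a)).totalDegree_le
          simp only [totalDegree_C, zero_add]
          omega
      have hH : homogeneousComponent 4 (aeval σf (C c' * X a * X b))
          + homogeneousComponent 3 (aeval σf (C c' * X a * X b)) = gb * E b + ga * E a := by
        rw [hval]
        have hexp : C c' * ((M a - E a) * (M b - E b))
            = C c' * (M a * M b) - (C c' * M a) * E b - (C c' * M b) * E a
              + (C c' * E a) * E b := by ring
        rw [hexp]
        have hT0deg : (C c' * (M a * M b)).totalDegree ≤ 2 := by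
          refine le_trans (totalDegree_mul _ _) ?_
          have := le_trans (totalDegree_mul (M a) (M b))
            (add_le_add (hMdeg a) (hMdeg b))
          simp only [totalDegree_C, zero_add]
          omega
        have h40 : homogeneousComponent 4 (C c' * (M a * M b)) = 0 :=
          homogeneousComponent_eq_zero _ _ (by omega)
        have h30 : homogeneousComponent 3 (C c' * (M a * M b)) = 0 :=
          homogeneousComponent_eq_zero _ _ (by omega)
        have h2Ma : homogeneousComponent 2 (C c' * M a) = 0 := by
          rw [homogeneousComponent_C_mul,
            homogeneousComponent_eq_zero 2 (M a) (by have := hMdeg a; omega), mul_zero]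
        have h2Mb : homogeneousComponent 2 (C c' * M b) = 0 := by
          rw [homogeneousComponent_C_mul,
            homogeneousComponent_eq_zero 2 (M b) (by have := hMdeg b; omega), mul_zero]
        have h41 : homogeneousComponent 4 ((C c' * M a) * E b) = 0 := by
          rw [show (4 : ℕ) = 2 + 2 from rfl, hom_mul _ _ (hEhom b) 2, h2Ma, zero_mul]
        have h42 : homogeneousComponent 4 ((C c' * M b) * E a) = 0 := by
          rw [show (4 : ℕ) = 2 + 2 from rfl, hom_mul _ _ (hEhom a) 2, h2Mb, zero_mul]
        have h31 : homogeneousComponent 3 ((C c' * M a) * E b)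
            = (C c' * homogeneousComponent 1 (M a)) * E b := by
          rw [show (3 : ℕ) = 1 + 2 from rfl, hom_mul _ _ (hEhom b) 1,
            homogeneousComponent_C_mul]
        have h32 : homogeneousComponent 3 ((C c' * M b) * E a)
            = (C c' * homogeneousComponent 1 (M b)) * E a := by
          rw [show (3 : ℕ) = 1 + 2 from rfl, hom_mul _ _ (hEhom a) 1,
            homogeneousComponent_C_mul]
        have hEa2 : homogeneousComponent 2 (E a) = E a := by
          rw [homogeneousComponent_of_mem ((mem_homogeneousSubmodule _ _).2 (hEhom a)),
            if_pos rfl]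
        have hEa1 : homogeneousComponent 1 (E a) = 0 := by
          rw [homogeneousComponent_of_mem ((mem_homogeneousSubmodule _ _).2 (hEhom a)),
            if_neg (by omega)]
        have h43 : homogeneousComponent 4 ((C c' * E a) * E b) = (C c' * E a) * E b := by
          rw [show (4 : ℕ) = 2 + 2 from rfl, hom_mul _ _ (hEhom b) 2,
            homogeneousComponent_C_mul, hEa2]
        have h33 : homogeneousComponent 3 ((C c' * E a) * E b) = 0 := by
          rw [show (3 : ℕ) = 1 + 2 from rfl, hom_mul _ _ (hEhom b) 1,
            homogeneousComponent_C_mul, hEa1, mul_zero, zero_mul]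
        simp only [map_add, map_sub]
        rw [h40, h30, h41, h42, h31, h32, h43, h33, hga, hgb]
        ring
      refine ⟨fun j => (if (b : ℕ) = (j : ℕ) then gb else 0)
        + (if (a : ℕ) = (j : ℕ) then ga else 0), ?_, ?_, ?_⟩
      · intro j
        dsimp only
        refine le_trans (totalDegree_add _ _) (max_le ?_ ?_)
        · split_ifs
          · exact hgbdeg
          · simp
        · split_ifs
          · exact le_trans hgadeg one_le_two
          · simp
      · rw [hH, hbridge gb b, hbridge ga a, ← Finset.sum_add_distrib]
        exact Finset.sum_congr rfl fun j _ => by dsimp only; ring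
      · intro j
        dsimp only
        apply hSadd
        · by_cases hbj : (b : ℕ) = (j : ℕ)
          · rw [if_pos hbj, hgb]
            obtain ⟨ℓ, cc, hl, heq⟩ := hEshape c' a
            refine ⟨ℓ - C c' * homogeneousComponent 1 (M a), cc, ?_, ?_⟩
            · refine le_trans (totalDegree_sub _ _) (max_le hl ?_)
              refine le_trans (totalDegree_mul _ _) ?_
              have := (homogeneousComponent_isHomogeneous 1 (M a)).totalDegree_le
              simp only [totalDegree_C, zero_add]
              omega
            · rw [heq]; ring
          · rw [if_neg hbj]; exact hS1 0 (by simp)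
        · by_cases haj : (a : ℕ) = (j : ℕ)
          · rw [if_pos haj]; exact hS1 ga hgadeg
          · rw [if_neg haj]; exact hS1 0 (by simp)
  -- assemble
  have hPf : ∀ f : MvPolynomial (Fin n) K, f.totalDegree ≤ 2 → P f := by
    intro f hf
    have hrw : f = ∑ d ∈ f.support, monomial d (coeff d f) :=
      (support_sum_monomial_coeff f).symm
    rw [hrw]
    exact Finset.sum_induction _ P hPadd hP0
      (fun d hd => key d _ (le_trans (le_totalDegree hd) hf))
  exact hPf (U i) (hUdeg i)
end

section
/- Let G = (x − 𝔮(y), U(x−𝔮(y), y)) be the secret map and G_pub = A₁ ∘ G ∘ A₂. Then for each j = 1, …, t, the polynomial (x_j − 𝔮_j(y)) ∘ A₂ lies in the 𝔽_q-linear span of the m components of G_pub together with the constant 1; moreover these t polynomials (x_j − 𝔮_j(y)) ∘ A₂ have total degree at most 2 and are linearly independent over 𝔽_q. -/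
open MvPolynomial

/-- Substitution `x_j ↦ x_j - q_j(y)` (identity on the `y`-variables). -/
noncomputable def substQ {K : Type*} [Field K] (n t : ℕ)
    (Q : Fin t → MvPolynomial (Fin n) K) :
    MvPolynomial (Fin n) K →ₐ[K] MvPolynomial (Fin n) K :=
  aeval fun k : Fin n => if hk : (k : ℕ) < t then X k - Q ⟨(k : ℕ), hk⟩ else X k

/-- The secret map `G = (x - q(y), U(x - q(y), y))`, as a family of `m` polynomials. -/
noncomputable def Gsecret {K : Type*} [Field K] {n m t : ℕ} (htn : t < n)
    (Q : Fin t → MvPolynomial (Fin n) K) (U : Fin (m - t) → MvPolynomial (Fin n) K)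
    (i : Fin m) : MvPolynomial (Fin n) K :=
  if h : (i : ℕ) < t then X (⟨(i : ℕ), h.trans htn⟩ : Fin n) - Q ⟨(i : ℕ), h⟩
  else substQ n t Q (U ⟨(i : ℕ) - t, by have := i.isLt; omega⟩)

/-- Composition `f ∘ A` of a polynomial with the affine map `A(v) = L v + c`. -/
noncomputable def compAff {K : Type*} [Field K] {n : ℕ}
    (L : Matrix (Fin n) (Fin n) K) (c : Fin n → K)
    (f : MvPolynomial (Fin n) K) : MvPolynomial (Fin n) K :=
  aeval (fun i : Fin n => (∑ j : Fin n, C (L i j) * X j) + C (c i)) f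

/-- The public map `G_pub = A₁ ∘ G ∘ A₂`, as a family of `m` polynomials. -/
noncomputable def Gpub {K : Type*} [Field K] {n m t : ℕ} (htn : t < n)
    (Q : Fin t → MvPolynomial (Fin n) K) (U : Fin (m - t) → MvPolynomial (Fin n) K)
    (L1 : Matrix (Fin m) (Fin m) K) (c1 : Fin m → K)
    (L2 : Matrix (Fin n) (Fin n) K) (c2 : Fin n → K)
    (i : Fin m) : MvPolynomial (Fin n) K :=
  (∑ j : Fin m, C (L1 i j) * compAff L2 c2 (Gsecret htn Q U j)) + C (c1 i)


noncomputable def affForm {K : Type*} [Field K] {n : ℕ} (L : Matrix (Fin n) (Fin n) K)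
    (c : Fin n → K) (i : Fin n) : MvPolynomial (Fin n) K :=
  (∑ j : Fin n, C (L i j) * X j) + C (c i)

lemma compAff_eq {K : Type*} [Field K] {n : ℕ} (L : Matrix (Fin n) (Fin n) K)
    (c : Fin n → K) (f : MvPolynomial (Fin n) K) :
    compAff L c f = aeval (affForm L c) f := rfl

lemma affForm_totalDegree_le {K : Type*} [Field K] {n : ℕ} (L : Matrix (Fin n) (Fin n) K)
    (c : Fin n → K) (i : Fin n) : (affForm L c i).totalDegree ≤ 1 := by
  refine (totalDegree_add _ _).trans (max_le ?_ (by simp [totalDegree_C]))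
  refine (totalDegree_finset_sum _ _).trans (Finset.sup_le fun j _ => ?_)
  refine (totalDegree_mul _ _).trans ?_
  simp [totalDegree_C]

lemma totalDegree_aeval_le' {K : Type*} [Field K] {n : ℕ}
    (φ : Fin n → MvPolynomial (Fin n) K) (hφ : ∀ i, (φ i).totalDegree ≤ 1)
    (f : MvPolynomial (Fin n) K) : (aeval φ f).totalDegree ≤ f.totalDegree := by
  rw [aeval_def, eval₂_eq]
  refine (totalDegree_finset_sum _ _).trans (Finset.sup_le fun d hd => ?_)
  refine (totalDegree_mul _ _).trans ?_
  rw [algebraMap_eq, totalDegree_C, zero_add]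
  refine (totalDegree_finset_prod _ _).trans ?_
  refine le_trans (Finset.sum_le_sum fun i _ =>
    (totalDegree_pow _ _).trans (by simpa using Nat.mul_le_mul_left (d i) (hφ i))) ?_
  exact le_totalDegree hd

lemma sum_C_mul_affine {K : Type*} [Field K] {n m : ℕ}
    (A B : Matrix (Fin m) (Fin m) K) (cv : Fin m → K)
    (v : Fin m → MvPolynomial (Fin n) K) (k : Fin m) :
    ∑ i : Fin m, C (A k i) * ((∑ j : Fin m, C (B i j) * v j) + C (cv i))
      = (∑ j : Fin m, C ((A * B) k j) * v j) + C (A.mulVec cv k) := by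
  calc ∑ i : Fin m, C (A k i) * ((∑ j : Fin m, C (B i j) * v j) + C (cv i))
      = ∑ i : Fin m, ((∑ j : Fin m, C (A k i * B i j) * v j) + C (A k i * cv i)) := by
        refine Finset.sum_congr rfl fun i _ => ?_
        rw [mul_add, Finset.mul_sum, ← C_mul]
        congr 1
        exact Finset.sum_congr rfl fun j _ => by rw [← mul_assoc, ← C_mul]
    _ = (∑ i : Fin m, ∑ j : Fin m, C (A k i * B i j) * v j) + ∑ i : Fin m, C (A k i * cv i) :=
        Finset.sum_add_distrib
    _ = (∑ j : Fin m, ∑ i : Fin m, C (A k i * B i j) * v j) + C (∑ i : Fin m, A k i * cv i) := by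
        rw [Finset.sum_comm, map_sum]
    _ = (∑ j : Fin m, C ((A * B) k j) * v j) + C (A.mulVec cv k) := by
        refine congrArg₂ (· + ·) ?_ rfl
        exact Finset.sum_congr rfl fun j _ => by rw [← Finset.sum_mul, ← map_sum, Matrix.mul_apply]

lemma aeval_affForm_affForm {K : Type*} [Field K] {n : ℕ}
    (L M : Matrix (Fin n) (Fin n) K) (c d : Fin n → K)
    (hLM : L * M = 1) (hd : L.mulVec d = -c) (i : Fin n) :
    aeval (affForm M d) (affForm L c i) = X i := by
  simp only [affForm, map_add, map_sum, map_mul, aeval_C, aeval_X, algebraMap_eq]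
  rw [sum_C_mul_affine L M d X i, hLM, hd]
  simp [Matrix.one_apply, apply_ite (C : K → MvPolynomial (Fin n) K), ite_mul,
    Finset.sum_ite_eq, map_neg]

lemma compAff_leftInv {K : Type*} [Field K] {n : ℕ}
    (L M : Matrix (Fin n) (Fin n) K) (c : Fin n → K)
    (hLM : L * M = 1) (hML : M * L = 1) (f : MvPolynomial (Fin n) K) :
    compAff M (-(M.mulVec c)) (compAff L c f) = f := by
  rw [compAff_eq, compAff_eq, comp_aeval_apply]
  have : (fun i => aeval (affForm M (-(M.mulVec c))) (affForm L c i)) = X := by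
    funext i
    exact aeval_affForm_affForm L M c _ hLM (by rw [Matrix.mulVec_neg, Matrix.mulVec_mulVec, hLM]; simp) i
  rw [this, aeval_X_left_apply]

lemma compAff_injective {K : Type*} [Field K] {n : ℕ}
    (L M : Matrix (Fin n) (Fin n) K) (c : Fin n → K)
    (hLM : L * M = 1) (hML : M * L = 1) :
    Function.Injective (compAff L c : MvPolynomial (Fin n) K → MvPolynomial (Fin n) K) :=
  Function.LeftInverse.injective (g := compAff M (-(M.mulVec c)))
    (fun f => compAff_leftInv L M c hLM hML f)

lemma linIndep_XsubQ {K : Type*} [Field K] {n t : ℕ} (htn : t < n)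
    (Q : Fin t → MvPolynomial (Fin n) K)
    (hQvars : ∀ j, ∀ i ∈ (Q j).vars, t ≤ (i : ℕ)) :
    LinearIndependent K (fun j : Fin t => X (Fin.castLE htn.le j) - Q j) := by
  rw [Fintype.linearIndependent_iff]
  intro c hc j0
  have hQ0 : ∀ j, coeff (Finsupp.single (Fin.castLE htn.le j0) 1) (Q j) = 0 := by
    intro j
    by_contra h
    have h1 : Finsupp.single (Fin.castLE htn.le j0) 1 ∈ (Q j).support := mem_support_iff.mpr h
    have h2 : (Fin.castLE htn.le j0) ∈ (Q j).vars :=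
      (mem_vars _).mpr ⟨_, h1, by simp [Finsupp.support_single_ne_zero]⟩
    have := hQvars j _ h2
    simp [Fin.coe_castLE] at this
    omega
  have hcoeff := congrArg (coeff (Finsupp.single (Fin.castLE htn.le j0) 1)) hc
  rw [coeff_sum] at hcoeff
  simp only [coeff_smul, coeff_sub, coeff_X', hQ0, sub_zero, coeff_zero, smul_eq_mul] at hcoeff
  have heq : ∀ j : Fin t,
      (Finsupp.single (Fin.castLE htn.le j) (1:ℕ) = Finsupp.single (Fin.castLE htn.le j0) 1)
        ↔ j = j0 := by
    intro j
    rw [Finsupp.single_left_inj one_ne_zero, Fin.castLE_inj]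
  rw [Finset.sum_congr rfl (fun j _ => by rw [if_congr (heq j) rfl rfl])] at hcoeff
  simpa using hcoeff
/-- each `(x_j - q_j(y)) ∘ A₂` lies in the span of the components of `G_pub`
together with `1`; moreover these `t` polynomials have total degree at most 2 and are
linearly independent. -/
theorem stmt_6 {K : Type*} [Field K] [Fintype K] {n m t : ℕ}
    (ht : 0 < t) (htn : t < n) (htm : t ≤ m)
    (Q : Fin t → MvPolynomial (Fin n) K)
    (hQdeg : ∀ j, (Q j).totalDegree ≤ 2)
    (hQvars : ∀ j, ∀ i ∈ (Q j).vars, t ≤ (i : ℕ))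
    (U : Fin (m - t) → MvPolynomial (Fin n) K)
    (hUdeg : ∀ i, (U i).totalDegree ≤ 2)
    (L1 : GL (Fin m) K) (c1 : Fin m → K)
    (L2 : GL (Fin n) K) (c2 : Fin n → K) :
    (∀ j : Fin t,
      compAff (L2 : Matrix (Fin n) (Fin n) K) c2 (X (Fin.castLE htn.le j) - Q j) ∈
        Submodule.span K ({1} ∪ Set.range
          (Gpub htn Q U (L1 : Matrix (Fin m) (Fin m) K) c1 (L2 : Matrix (Fin n) (Fin n) K) c2)) ∧
      (compAff (L2 : Matrix (Fin n) (Fin n) K) c2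
          (X (Fin.castLE htn.le j) - Q j)).totalDegree ≤ 2) ∧
    LinearIndependent K (fun j : Fin t =>
      compAff (L2 : Matrix (Fin n) (Fin n) K) c2 (X (Fin.castLE htn.le j) - Q j)) := by
  classical
  set N : Matrix (Fin m) (Fin m) K := ((L1⁻¹ : GL (Fin m) K) : Matrix (Fin m) (Fin m) K) with hN
  have hNL : N * (L1 : Matrix (Fin m) (Fin m) K) = 1 := L1.inv_mul
  set g : Fin m → MvPolynomial (Fin n) K :=
    fun i => compAff (L2 : Matrix (Fin n) (Fin n) K) c2 (Gsecret htn Q U i) with hgdef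
  set P : Fin m → MvPolynomial (Fin n) K :=
    Gpub htn Q U (L1 : Matrix (Fin m) (Fin m) K) c1 (L2 : Matrix (Fin n) (Fin n) K) c2 with hP
  have hkey : ∀ k : Fin m, ∑ i : Fin m, C (N k i) * P i = g k + C (N.mulVec c1 k) := by
    intro k
    have h1 := sum_C_mul_affine N (L1 : Matrix (Fin m) (Fin m) K) c1 g k
    rw [hNL] at h1
    have h2 : ∀ i, P i = (∑ j : Fin m, C ((L1 : Matrix (Fin m) (Fin m) K) i j) * g j) + C (c1 i) :=
      fun i => rfl
    simp only [h2]
    rw [h1]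
    congr 1
    simp [Matrix.one_apply, apply_ite (C : K → MvPolynomial (Fin n) K), ite_mul,
      Finset.sum_ite_eq]
  have hgmem : ∀ k : Fin m, g k ∈ Submodule.span K ({1} ∪ Set.range P) := by
    intro k
    have : g k = (∑ i : Fin m, C (N k i) * P i) - C (N.mulVec c1 k) := by
      rw [hkey k]; ring
    rw [this]
    refine Submodule.sub_mem _ (Submodule.sum_mem _ fun i _ => ?_) ?_
    · rw [← smul_eq_C_mul]
      exact Submodule.smul_mem _ _ (Submodule.subset_span (Or.inr ⟨i, rfl⟩))
    · have : (C (N.mulVec c1 k) : MvPolynomial (Fin n) K) = (N.mulVec c1 k) • 1 := by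
        rw [smul_eq_C_mul, mul_one]
      rw [this]
      exact Submodule.smul_mem _ _ (Submodule.subset_span (Or.inl rfl))
  have hgj : ∀ j : Fin t, g (Fin.castLE htm j)
      = compAff (L2 : Matrix (Fin n) (Fin n) K) c2 (X (Fin.castLE htn.le j) - Q j) := by
    intro j
    have ht' : ((Fin.castLE htm j : Fin m) : ℕ) < t := j.isLt
    have : Gsecret (K := K) htn Q U (Fin.castLE htm j) = X (Fin.castLE htn.le j) - Q j := by
      simp only [Gsecret, dif_pos ht']
      exact congrArg₂ Sub.sub (congrArg X (Fin.ext rfl)) (congrArg Q (Fin.ext rfl))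
    simpa [hgdef] using congrArg (compAff (L2 : Matrix (Fin n) (Fin n) K) c2) this
  refine ⟨fun j => ⟨?_, ?_⟩, ?_⟩
  · rw [← hgj j]
    exact hgmem _
  · rw [show compAff (L2 : Matrix (Fin n) (Fin n) K) c2 (X (Fin.castLE htn.le j) - Q j)
        = aeval (affForm (L2 : Matrix (Fin n) (Fin n) K) c2) (X (Fin.castLE htn.le j) - Q j)
        from rfl]
    refine (totalDegree_aeval_le' _ (affForm_totalDegree_le _ _) _).trans ?_
    refine (totalDegree_sub _ _).trans (max_le ?_ (hQdeg j))
    simp [totalDegree_X]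
  · have li0 := linIndep_XsubQ htn Q hQvars
    have inj : Function.Injective
        (compAff (L2 : Matrix (Fin n) (Fin n) K) c2 :
          MvPolynomial (Fin n) K → MvPolynomial (Fin n) K) :=
      compAff_injective _ ((L2⁻¹ : GL (Fin n) K) : Matrix (Fin n) (Fin n) K) c2
        L2.mul_inv L2.inv_mul
    exact li0.map' (aeval (affForm (L2 : Matrix (Fin n) (Fin n) K) c2)).toLinearMap
      (LinearMap.ker_eq_bot.mpr inj)
end

section
/- Let G = (x − 𝔮(y), U(x−𝔮(y), y)) be the secret map and G_pub = A₁ ∘ G ∘ A₂. Then for every c ∈ 𝔽_q^m, the ideal of the polynomial ring in n variables over 𝔽_q generated by the m components of G_pub − c can be generated by m polynomials of total degree at most 2. -/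
open MvPolynomial

section MyAux

variable {K : Type*} [Field K]

lemma myAux_totalDegree_aeval_le {σ τ : Type*}
    (f : σ → MvPolynomial τ K) (hf : ∀ i, (f i).totalDegree ≤ 1)
    (p : MvPolynomial σ K) : (aeval f p).totalDegree ≤ p.totalDegree := by
  conv_lhs => rw [p.as_sum]
  rw [map_sum]
  refine (totalDegree_finset_sum _ _).trans (Finset.sup_le fun d hd => ?_)
  rw [aeval_monomial]
  refine (totalDegree_mul _ _).trans ?_
  have h1 : (algebraMap K (MvPolynomial τ K) (coeff d p)).totalDegree = 0 := by
    rw [MvPolynomial.algebraMap_eq]; exact totalDegree_C _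
  rw [h1, zero_add]
  refine le_trans ?_ (le_totalDegree hd)
  rw [Finsupp.prod]
  refine (totalDegree_finset_prod _ _).trans ?_
  refine le_trans (Finset.sum_le_sum fun i _ => ?_) le_rfl
  calc (f i ^ d i).totalDegree ≤ d i * (f i).totalDegree := totalDegree_pow _ _
    _ ≤ d i * 1 := Nat.mul_le_mul_left _ (hf i)
    _ = d i := mul_one _

lemma myAux_hom_diff_mem {σ : Type*} {A : Type*} [CommRing A] [Algebra K A]
    (φ ψ : MvPolynomial σ K →ₐ[K] A) (J : Ideal A)
    (h : ∀ i, φ (X i) - ψ (X i) ∈ J) (p : MvPolynomial σ K) : φ p - ψ p ∈ J := by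
  induction p using MvPolynomial.induction_on with
  | C a => simp
  | add p q hp hq =>
      have e : φ (p + q) - ψ (p + q) = (φ p - ψ p) + (φ q - ψ q) := by
        rw [map_add, map_add]; ring
      rw [e]; exact J.add_mem hp hq
  | mul_X p i hp =>
      have e : φ (p * X i) - ψ (p * X i)
          = φ p * (φ (X i) - ψ (X i)) + (φ p - ψ p) * ψ (X i) := by
        rw [map_mul, map_mul]; ring
      rw [e]
      exact J.add_mem (Ideal.mul_mem_left _ _ (h i)) (Ideal.mul_mem_right _ _ hp)

lemma myAux_span_GL {m n : ℕ} (M : GL (Fin m) K) (v : Fin m → MvPolynomial (Fin n) K) :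
    Ideal.span (Set.range fun i => ∑ j, C ((M : Matrix (Fin m) (Fin m) K) i j) * v j)
      = Ideal.span (Set.range v) := by
  apply le_antisymm
  · rw [Ideal.span_le]
    rintro _ ⟨i, rfl⟩
    exact Ideal.sum_mem _ fun j _ =>
      Ideal.mul_mem_left _ _ (Ideal.subset_span ⟨j, rfl⟩)
  · rw [Ideal.span_le]
    rintro _ ⟨k, rfl⟩
    have hinv : ((M⁻¹ : GL (Fin m) K) : Matrix (Fin m) (Fin m) K)
        * (M : Matrix (Fin m) (Fin m) K) = 1 := by
      rw [← Units.val_mul, inv_mul_cancel, Units.val_one]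
    have key : v k = ∑ i, C (((M⁻¹ : GL (Fin m) K) : Matrix (Fin m) (Fin m) K) k i)
        * ∑ j, C ((M : Matrix (Fin m) (Fin m) K) i j) * v j := by
      calc v k = ∑ j, C ((1 : Matrix (Fin m) (Fin m) K) k j) * v j := by
            simp [Matrix.one_apply, Finset.sum_ite_eq]
        _ = ∑ j, C ((((M⁻¹ : GL (Fin m) K) : Matrix (Fin m) (Fin m) K)
              * (M : Matrix (Fin m) (Fin m) K)) k j) * v j := by rw [hinv]
        _ = ∑ j, ∑ i, C (((M⁻¹ : GL (Fin m) K) : Matrix (Fin m) (Fin m) K) k i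
              * (M : Matrix (Fin m) (Fin m) K) i j) * v j := by
            simp [Matrix.mul_apply, Finset.sum_mul, map_sum]
        _ = ∑ i, C (((M⁻¹ : GL (Fin m) K) : Matrix (Fin m) (Fin m) K) k i)
              * ∑ j, C ((M : Matrix (Fin m) (Fin m) K) i j) * v j := by
            rw [Finset.sum_comm]
            simp [Finset.mul_sum, C_mul, mul_assoc]
    rw [key]
    exact Ideal.sum_mem _ fun i _ => Ideal.mul_mem_left _ _ (Ideal.subset_span ⟨i, rfl⟩)

end MyAux

/-- for every `c ∈ K^m`, the ideal generated by the `m` components of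
`G_pub - c` can be generated by `m` polynomials of total degree at most 2. -/
theorem stmt_7 {K : Type*} [Field K] [Fintype K] {n m t : ℕ}
    (ht : 0 < t) (htn : t < n) (htm : t ≤ m)
    (Q : Fin t → MvPolynomial (Fin n) K)
    (hQdeg : ∀ j, (Q j).totalDegree ≤ 2)
    (hQvars : ∀ j, ∀ i ∈ (Q j).vars, t ≤ (i : ℕ))
    (U : Fin (m - t) → MvPolynomial (Fin n) K)
    (hUdeg : ∀ i, (U i).totalDegree ≤ 2)
    (L1 : GL (Fin m) K) (c1 : Fin m → K)
    (L2 : GL (Fin n) K) (c2 : Fin n → K)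
    (c : Fin m → K) :
    ∃ g : Fin m → MvPolynomial (Fin n) K,
      (∀ i, (g i).totalDegree ≤ 2) ∧
      Ideal.span (Set.range fun i : Fin m =>
          Gpub htn Q U (L1 : Matrix (Fin m) (Fin m) K) c1 (L2 : Matrix (Fin n) (Fin n) K) c2 i
            - C (c i))
        = Ideal.span (Set.range g) := by
  classical
  set b : Fin m → K :=
    fun j => ∑ k, ((L1⁻¹ : GL (Fin m) K) : Matrix (Fin m) (Fin m) K) j k * (c k - c1 k) with hb
  set φ : MvPolynomial (Fin n) K →ₐ[K] MvPolynomial (Fin n) K :=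
    aeval (fun i : Fin n =>
      (∑ j : Fin n, C ((L2 : Matrix (Fin n) (Fin n) K) i j) * X j) + C (c2 i)) with hφ
  set ψ : MvPolynomial (Fin n) K →ₐ[K] MvPolynomial (Fin n) K :=
    aeval (fun k : Fin n => if hk : (k : ℕ) < t then
      (C (b ⟨(k : ℕ), lt_of_lt_of_le hk htm⟩) : MvPolynomial (Fin n) K) else X k) with hψ
  set g' : Fin m → MvPolynomial (Fin n) K := fun j =>
    if hj : (j : ℕ) < t then Gsecret htn Q U j - C (b j)
    else ψ (U ⟨(j : ℕ) - t, by have := j.isLt; omega⟩) - C (b j) with hg'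
  -- matrix facts
  have hMmMinv : (L1 : Matrix (Fin m) (Fin m) K)
      * ((L1⁻¹ : GL (Fin m) K) : Matrix (Fin m) (Fin m) K) = 1 := by
    rw [← Units.val_mul, mul_inv_cancel, Units.val_one]
  have hsum : ∀ i, ∑ j, (L1 : Matrix (Fin m) (Fin m) K) i j * b j = c i - c1 i := by
    intro i
    calc ∑ j, (L1 : Matrix (Fin m) (Fin m) K) i j * b j
        = ∑ j, ∑ k, (L1 : Matrix (Fin m) (Fin m) K) i j
            * (((L1⁻¹ : GL (Fin m) K) : Matrix (Fin m) (Fin m) K) j k * (c k - c1 k)) := by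
          simp only [hb, Finset.mul_sum]
      _ = ∑ k, ((L1 : Matrix (Fin m) (Fin m) K)
            * ((L1⁻¹ : GL (Fin m) K) : Matrix (Fin m) (Fin m) K)) i k * (c k - c1 k) := by
          rw [Finset.sum_comm]
          simp [Matrix.mul_apply, Finset.sum_mul, mul_assoc]
      _ = c i - c1 i := by rw [hMmMinv]; simp [Matrix.one_apply]
  -- H : the polynomials h_j - C (b j), expressed via φ
  set H : Fin m → MvPolynomial (Fin n) K :=
    fun j => φ (Gsecret htn Q U j - C (b j)) with hH
  have hHj : ∀ j, H j = compAff (L2 : Matrix (Fin n) (Fin n) K) c2 (Gsecret htn Q U j)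
      - C (b j) := by
    intro j
    rw [hH]
    simp only [map_sub]
    rw [hφ]
    congr 1
    simp [MvPolynomial.algebraMap_eq]
  have hgen : ∀ i : Fin m,
      Gpub htn Q U (L1 : Matrix (Fin m) (Fin m) K) c1 (L2 : Matrix (Fin n) (Fin n) K) c2 i
        - C (c i)
      = ∑ j, C ((L1 : Matrix (Fin m) (Fin m) K) i j) * H j := by
    intro i
    have e1 : ∑ j, C ((L1 : Matrix (Fin m) (Fin m) K) i j) * H j
        = (∑ j, C ((L1 : Matrix (Fin m) (Fin m) K) i j)
            * compAff (L2 : Matrix (Fin n) (Fin n) K) c2 (Gsecret htn Q U j))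
          - C (c i - c1 i) := by
      rw [← hsum i]
      simp only [hHj, mul_sub, Finset.sum_sub_distrib, ← C_mul, map_sum]
    rw [e1]
    simp only [Gpub]
    rw [map_sub]
    ring
  -- membership of the substitution differences
  have hdiff : ∀ (J : Ideal (MvPolynomial (Fin n) K)),
      (∀ jt : Fin m, (jt : ℕ) < t → Gsecret htn Q U jt - C (b jt) ∈ J) →
      ∀ p, substQ n t Q p - ψ p ∈ J := by
    intro J hJ p
    refine myAux_hom_diff_mem _ _ _ (fun k => ?_) p
    by_cases hk : (k : ℕ) < t
    · have e1 : substQ n t Q (X k) = X k - Q ⟨(k : ℕ), hk⟩ := by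
        simp only [substQ, aeval_X]
        rw [dif_pos hk]
      have e2 : ψ (X k) = C (b ⟨(k : ℕ), lt_of_lt_of_le hk htm⟩) := by
        simp only [hψ, aeval_X]
        rw [dif_pos hk]
      rw [e1, e2]
      have hmem := hJ ⟨(k : ℕ), lt_of_lt_of_le hk htm⟩ hk
      have eG : Gsecret htn Q U ⟨(k : ℕ), lt_of_lt_of_le hk htm⟩
          = X k - Q ⟨(k : ℕ), hk⟩ := by
        simp [Gsecret, hk]
      rw [eG] at hmem
      exact hmem
    · have e1 : substQ n t Q (X k) = X k := by
        simp only [substQ, aeval_X]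
        rw [dif_neg hk]
      have e2 : ψ (X k) = X k := by
        simp only [hψ, aeval_X]
        rw [dif_neg hk]
      rw [e1, e2, sub_self]
      exact J.zero_mem
  -- inner span equality
  have step3 : Ideal.span (Set.range fun j => Gsecret htn Q U j - C (b j))
      = Ideal.span (Set.range g') := by
    apply le_antisymm
    · rw [Ideal.span_le]
      rintro _ ⟨j, rfl⟩
      show Gsecret htn Q U j - C (b j) ∈ Ideal.span (Set.range g')
      by_cases hj : (j : ℕ) < t
      · have e : g' j = Gsecret htn Q U j - C (b j) := by
          rw [hg']; exact dif_pos hj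
        rw [← e]; exact Ideal.subset_span ⟨j, rfl⟩
      · have hG : Gsecret htn Q U j
            = substQ n t Q (U ⟨(j : ℕ) - t, by have := j.isLt; omega⟩) := by
          simp [Gsecret, hj]
        have hmem1 : substQ n t Q (U ⟨(j : ℕ) - t, by have := j.isLt; omega⟩)
            - ψ (U ⟨(j : ℕ) - t, by have := j.isLt; omega⟩)
            ∈ Ideal.span (Set.range g') := by
          refine hdiff _ (fun jt hjt => ?_) _
          have e : g' jt = Gsecret htn Q U jt - C (b jt) := by
            rw [hg']; exact dif_pos hjt
          rw [← e]; exact Ideal.subset_span ⟨jt, rfl⟩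
        have hmem2 : ψ (U ⟨(j : ℕ) - t, by have := j.isLt; omega⟩) - C (b j)
            ∈ Ideal.span (Set.range g') := by
          have e : g' j = ψ (U ⟨(j : ℕ) - t, by have := j.isLt; omega⟩) - C (b j) := by
            rw [hg']; exact dif_neg hj
          rw [← e]; exact Ideal.subset_span ⟨j, rfl⟩
        have e : Gsecret htn Q U j - C (b j)
            = (substQ n t Q (U ⟨(j : ℕ) - t, by have := j.isLt; omega⟩)
                - ψ (U ⟨(j : ℕ) - t, by have := j.isLt; omega⟩))
              + (ψ (U ⟨(j : ℕ) - t, by have := j.isLt; omega⟩) - C (b j)) := by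
          rw [hG]; ring
        rw [e]; exact Ideal.add_mem _ hmem1 hmem2
    · rw [Ideal.span_le]
      rintro _ ⟨j, rfl⟩
      show g' j ∈ Ideal.span (Set.range fun j => Gsecret htn Q U j - C (b j))
      by_cases hj : (j : ℕ) < t
      · have e : g' j = Gsecret htn Q U j - C (b j) := by
          rw [hg']; exact dif_pos hj
        rw [e]; exact Ideal.subset_span ⟨j, rfl⟩
      · have hG : Gsecret htn Q U j
            = substQ n t Q (U ⟨(j : ℕ) - t, by have := j.isLt; omega⟩) := by
          simp [Gsecret, hj]
        have hmem1 : substQ n t Q (U ⟨(j : ℕ) - t, by have := j.isLt; omega⟩)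
            - ψ (U ⟨(j : ℕ) - t, by have := j.isLt; omega⟩)
            ∈ Ideal.span (Set.range fun j => Gsecret htn Q U j - C (b j)) := by
          refine hdiff _ (fun jt hjt => ?_) _
          exact Ideal.subset_span ⟨jt, rfl⟩
        have e0 : g' j = ψ (U ⟨(j : ℕ) - t, by have := j.isLt; omega⟩) - C (b j) := by
          rw [hg']; exact dif_neg hj
        have e : g' j
            = (Gsecret htn Q U j - C (b j))
              - (substQ n t Q (U ⟨(j : ℕ) - t, by have := j.isLt; omega⟩)
                - ψ (U ⟨(j : ℕ) - t, by have := j.isLt; omega⟩)) := by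
          rw [e0, hG]; ring
        rw [e]
        exact Ideal.sub_mem _ (Ideal.subset_span ⟨j, rfl⟩) hmem1
  -- map by φ
  have hmap : ∀ (u : Fin m → MvPolynomial (Fin n) K),
      Ideal.map φ.toRingHom (Ideal.span (Set.range u))
        = Ideal.span (Set.range fun j => φ (u j)) := by
    intro u
    rw [Ideal.map_span, ← Set.range_comp]
    rfl
  -- degree bounds
  have haff : ∀ i : Fin n,
      ((∑ j : Fin n, C ((L2 : Matrix (Fin n) (Fin n) K) i j) * X j) + C (c2 i)).totalDegree
        ≤ 1 := by
    intro i
    refine (totalDegree_add _ _).trans (max_le ?_ ?_)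
    · refine (totalDegree_finset_sum _ _).trans (Finset.sup_le fun j _ => ?_)
      refine (totalDegree_mul _ _).trans ?_
      rw [totalDegree_C, totalDegree_X]
    · rw [totalDegree_C]; omega
  have hψaff : ∀ k : Fin n,
      ((if hk : (k : ℕ) < t then
        (C (b ⟨(k : ℕ), lt_of_lt_of_le hk htm⟩) : MvPolynomial (Fin n) K)
        else X k)).totalDegree ≤ 1 := by
    intro k
    by_cases hk : (k : ℕ) < t
    · rw [dif_pos hk, totalDegree_C]; omega
    · rw [dif_neg hk, totalDegree_X]
  have hg'deg : ∀ j, (g' j).totalDegree ≤ 2 := by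
    intro j
    by_cases hj : (j : ℕ) < t
    · have e0 : g' j = Gsecret htn Q U j - C (b j) := by
        rw [hg']; exact dif_pos hj
      have e : g' j = X (⟨(j : ℕ), hj.trans htn⟩ : Fin n) - Q ⟨(j : ℕ), hj⟩ - C (b j) := by
        rw [e0]; simp [Gsecret, hj]
      rw [e]
      refine (totalDegree_sub _ _).trans (max_le ?_ ?_)
      · refine (totalDegree_sub _ _).trans (max_le ?_ (hQdeg _))
        rw [totalDegree_X]; omega
      · rw [totalDegree_C]; omega
    · have e : g' j = ψ (U ⟨(j : ℕ) - t, by have := j.isLt; omega⟩) - C (b j) := by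
        rw [hg']; exact dif_neg hj
      rw [e]
      refine (totalDegree_sub _ _).trans (max_le ?_ ?_)
      · rw [hψ]
        exact (myAux_totalDegree_aeval_le _ hψaff _).trans (hUdeg _)
      · rw [totalDegree_C]; omega
  refine ⟨fun i => φ (g' i), ?_, ?_⟩
  · intro i
    rw [hφ]
    exact (myAux_totalDegree_aeval_le _ haff _).trans (hg'deg i)
  · calc Ideal.span (Set.range fun i : Fin m =>
        Gpub htn Q U (L1 : Matrix (Fin m) (Fin m) K) c1 (L2 : Matrix (Fin n) (Fin n) K) c2 i
          - C (c i))
        = Ideal.span (Set.range fun i : Fin m =>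
            ∑ j, C ((L1 : Matrix (Fin m) (Fin m) K) i j) * H j) := by
          rw [funext hgen]
      _ = Ideal.span (Set.range H) := myAux_span_GL L1 H
      _ = Ideal.map φ.toRingHom
            (Ideal.span (Set.range fun j => Gsecret htn Q U j - C (b j))) := (hmap _).symm
      _ = Ideal.map φ.toRingHom (Ideal.span (Set.range g')) := by rw [step3]
      _ = Ideal.span (Set.range fun i => φ (g' i)) := hmap _
end

section
/- Let G = (x − 𝔮(y), U(x−𝔮(y), y)) be the secret map and G_pub = A₁ ∘ G ∘ A₂, regarded as a function 𝔽_q^n → 𝔽_q^m. Then there exist m−t linearly independent polynomials R_pub^{(1)}, …, R_pub^{(m−t)} ∈ 𝔽_q[z₁,…,z_n, w₁,…,w_m], each of total degree at most 2, such that R_pub^{(i)}(z̄, G_pub(z̄)) = 0 for every z̄ ∈ 𝔽_q^n and every i. -/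
open MvPolynomial

/-- The public map `G_pub = A₁ ∘ G ∘ A₂`, as a function `K^n → K^m`, where
`A₁(v) = L₁ v + c₁` and `A₂(v) = L₂ v + c₂`. -/
noncomputable def GpubFun {K : Type*} [Field K] {n m t : ℕ} (htn : t < n)
    (Q : Fin t → MvPolynomial (Fin n) K) (U : Fin (m - t) → MvPolynomial (Fin n) K)
    (L1 : Matrix (Fin m) (Fin m) K) (c1 : Fin m → K)
    (L2 : Matrix (Fin n) (Fin n) K) (c2 : Fin n → K)
    (z : Fin n → K) : Fin m → K :=
  L1.mulVec (fun j => eval (L2.mulVec z + c2) (Gsecret htn Q U j)) + c1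

lemma tdeg_aeval_le {K : Type*} [CommSemiring K] {σ τ : Type*}
    (f : σ → MvPolynomial τ K) (hf : ∀ k, (f k).totalDegree ≤ 1)
    (p : MvPolynomial σ K) : (aeval f p).totalDegree ≤ p.totalDegree := by
  conv_lhs => rw [p.as_sum, map_sum]
  refine (totalDegree_finset_sum _ _).trans (Finset.sup_le fun s hs => ?_)
  rw [aeval_monomial]
  refine (totalDegree_mul _ _).trans ?_
  have h1 : (algebraMap K (MvPolynomial τ K) (coeff s p)).totalDegree = 0 := by
    simp [algebraMap_eq]
  rw [h1, zero_add]
  refine ((totalDegree_finset_prod _ _).trans ?_).trans (le_totalDegree hs)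
  rw [Finsupp.sum]
  refine Finset.sum_le_sum fun k _ => ?_
  exact (totalDegree_pow _ _).trans (by
    calc s k * (f k).totalDegree ≤ s k * 1 := Nat.mul_le_mul_left _ (hf k)
    _ = s k := Nat.mul_one _)

lemma eval_aeval' {K : Type*} [CommSemiring K] {σ τ : Type*}
    (f : σ → MvPolynomial τ K) (g : τ → K) (p : MvPolynomial σ K) :
    eval g (aeval f p) = eval (fun k => eval g (f k)) p := by
  rw [aeval_def, algebraMap_eq, ← eval_assoc]
  rfl

/-- linear polynomial `(M.mulVec (w - c)) j` in the `inr` variables -/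
noncomputable def linW {K : Type*} [Field K] (n m : ℕ)
    (M : Matrix (Fin m) (Fin m) K) (c : Fin m → K) (j : Fin m) :
    MvPolynomial (Fin n ⊕ Fin m) K :=
  (∑ j', C (M j j') * X (Sum.inr j')) - C (M.mulVec c j)

noncomputable def linZ {K : Type*} [Field K] (n m : ℕ)
    (L : Matrix (Fin n) (Fin n) K) (c : Fin n → K) (k : Fin n) :
    MvPolynomial (Fin n ⊕ Fin m) K :=
  (∑ k', C (L k k') * X (Sum.inl k')) + C (c k)

lemma eval_linW {K : Type*} [Field K] {n m : ℕ}
    (M : Matrix (Fin m) (Fin m) K) (c : Fin m → K) (j : Fin m)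
    (z : Fin n → K) (w : Fin m → K) :
    eval (Sum.elim z w) (linW n m M c j) = M.mulVec (w - c) j := by
  simp [linW, Matrix.mulVec, dotProduct, mul_sub, Finset.sum_sub_distrib]

lemma eval_linZ {K : Type*} [Field K] {n m : ℕ}
    (L : Matrix (Fin n) (Fin n) K) (c : Fin n → K) (k : Fin n)
    (z : Fin n → K) (w : Fin m → K) :
    eval (Sum.elim z w) (linZ n m L c k) = (L.mulVec z + c) k := by
  simp [linZ, Matrix.mulVec, dotProduct]

lemma tdeg_linW {K : Type*} [Field K] {n m : ℕ}
    (M : Matrix (Fin m) (Fin m) K) (c : Fin m → K) (j : Fin m) :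
    (linW n m M c j).totalDegree ≤ 1 := by
  refine (totalDegree_sub _ _).trans (max_le ?_ (by simp))
  refine (totalDegree_finset_sum _ _).trans (Finset.sup_le fun j' _ => ?_)
  refine (totalDegree_mul _ _).trans ?_
  simp [totalDegree_X]

lemma tdeg_linZ {K : Type*} [Field K] {n m : ℕ}
    (L : Matrix (Fin n) (Fin n) K) (c : Fin n → K) (k : Fin n) :
    (linZ n m L c k : MvPolynomial (Fin n ⊕ Fin m) K).totalDegree ≤ 1 := by
  refine (totalDegree_add _ _).trans (max_le ?_ (by simp))
  refine (totalDegree_finset_sum _ _).trans (Finset.sup_le fun j' _ => ?_)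
  refine (totalDegree_mul _ _).trans ?_
  simp [totalDegree_X]

/-- there exist `m - t` linearly independent polynomials of total degree at
most 2 in the input/output variables, vanishing at every input/output pair of `G_pub`. -/
theorem stmt_12 {K : Type*} [Field K] [Fintype K] {n m t : ℕ}
    (ht : 0 < t) (htn : t < n) (htm : t ≤ m)
    (Q : Fin t → MvPolynomial (Fin n) K)
    (hQdeg : ∀ j, (Q j).totalDegree ≤ 2)
    (hQvars : ∀ j, ∀ i ∈ (Q j).vars, t ≤ (i : ℕ))
    (U : Fin (m - t) → MvPolynomial (Fin n) K)
    (hUdeg : ∀ i, (U i).totalDegree ≤ 2)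
    (L1 : GL (Fin m) K) (c1 : Fin m → K)
    (L2 : GL (Fin n) K) (c2 : Fin n → K) :
    ∃ R : Fin (m - t) → MvPolynomial (Fin n ⊕ Fin m) K,
      LinearIndependent K R ∧
      ∀ i : Fin (m - t),
        (R i).totalDegree ≤ 2 ∧
        ∀ z : Fin n → K,
          eval (Sum.elim z (GpubFun htn Q U (L1 : Matrix (Fin m) (Fin m) K) c1
            (L2 : Matrix (Fin n) (Fin n) K) c2 z)) (R i) = 0 := by
  classical
  set M1 : Matrix (Fin m) (Fin m) K := ((L1⁻¹ : GL (Fin m) K) : Matrix (Fin m) (Fin m) K)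
    with hM1
  have hML : M1 * (L1 : Matrix (Fin m) (Fin m) K) = 1 := by
    rw [hM1]
    exact_mod_cast Units.inv_mul L1
  have hidx : ∀ i : Fin (m - t), t + (i : ℕ) < m := fun i => by
    have := i.isLt; omega
  -- substitution variables
  set σf : Fin n → MvPolynomial (Fin n ⊕ Fin m) K := fun k =>
    if h : (k : ℕ) < t then linW n m M1 c1 ⟨(k : ℕ), h.trans_le htm⟩
    else linZ n m (L2 : Matrix (Fin n) (Fin n) K) c2 k with hσf
  have hσdeg : ∀ k, (σf k).totalDegree ≤ 1 := by
    intro k; rw [hσf]; dsimp only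
    split
    · exact tdeg_linW _ _ _
    · exact tdeg_linZ _ _ _
  set R : Fin (m - t) → MvPolynomial (Fin n ⊕ Fin m) K := fun i =>
    aeval σf (U i) - linW n m M1 c1 ⟨t + (i : ℕ), hidx i⟩ with hR
  -- key evaluation: for any z, u
  have keval : ∀ (i : Fin (m - t)) (z : Fin n → K) (u : Fin m → K),
      eval (Sum.elim z ((L1 : Matrix (Fin m) (Fin m) K).mulVec u + c1)) (R i) =
        eval (fun k : Fin n => if h : (k : ℕ) < t then u ⟨(k : ℕ), h.trans_le htm⟩
          else ((L2 : Matrix (Fin n) (Fin n) K).mulVec z + c2) k) (U i)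
          - u ⟨t + (i : ℕ), hidx i⟩ := by
    intro i z u
    have hlw : ∀ j : Fin m,
        eval (Sum.elim z ((L1 : Matrix (Fin m) (Fin m) K).mulVec u + c1)) (linW n m M1 c1 j)
          = u j := by
      intro j
      rw [eval_linW]
      have h : ((L1 : Matrix (Fin m) (Fin m) K).mulVec u + c1) - c1
          = (L1 : Matrix (Fin m) (Fin m) K).mulVec u := by
        ext j'; simp
      rw [h, Matrix.mulVec_mulVec, hML, Matrix.one_mulVec]
    have hpt : (fun k : Fin n =>
        eval (Sum.elim z ((L1 : Matrix (Fin m) (Fin m) K).mulVec u + c1)) (σf k))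
        = (fun k : Fin n => if h : (k : ℕ) < t then u ⟨(k : ℕ), h.trans_le htm⟩
          else ((L2 : Matrix (Fin n) (Fin n) K).mulVec z + c2) k) := by
      funext k
      rw [hσf]; dsimp only
      split
      · rw [hlw]
      · rw [eval_linZ]
    rw [hR]; dsimp only
    rw [map_sub, eval_aeval', hpt, hlw]
  refine ⟨R, ?_, fun i => ⟨?_, ?_⟩⟩
  · -- linear independence
    rw [Fintype.linearIndependent_iff]
    intro g hg k
    set u1 : Fin m → K := Pi.single (⟨t + (k : ℕ), hidx k⟩ : Fin m) (1 : K) with hu1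
    have h1 := congrArg (eval (Sum.elim (0 : Fin n → K)
      ((L1 : Matrix (Fin m) (Fin m) K).mulVec u1 + c1))) hg
    have h2 := congrArg (eval (Sum.elim (0 : Fin n → K)
      ((L1 : Matrix (Fin m) (Fin m) K).mulVec (0 : Fin m → K) + c1))) hg
    rw [map_sum, map_zero] at h1 h2
    simp only [smul_eval] at h1 h2
    have hu1x : ∀ kk : Fin n, (h : (kk : ℕ) < t) →
        u1 ⟨(kk : ℕ), h.trans_le htm⟩ = 0 := by
      intro kk h
      rw [hu1, Pi.single_apply, if_neg]
      intro heq
      have : (kk : ℕ) = t + (k : ℕ) := congrArg Fin.val heq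
      omega
    have h1' : ∀ i, eval (Sum.elim (0 : Fin n → K)
        ((L1 : Matrix (Fin m) (Fin m) K).mulVec u1 + c1)) (R i)
        = eval (Sum.elim (0 : Fin n → K)
        ((L1 : Matrix (Fin m) (Fin m) K).mulVec (0 : Fin m → K) + c1)) (R i)
        - (if i = k then 1 else 0) := by
      intro i
      rw [keval i 0 u1, keval i 0 0]
      have hfun : (fun kk : Fin n => if h : (kk : ℕ) < t then
            u1 ⟨(kk : ℕ), h.trans_le htm⟩
          else ((L2 : Matrix (Fin n) (Fin n) K).mulVec 0 + c2) kk)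
          = (fun kk : Fin n => if h : (kk : ℕ) < t then
            (0 : Fin m → K) ⟨(kk : ℕ), h.trans_le htm⟩
          else ((L2 : Matrix (Fin n) (Fin n) K).mulVec 0 + c2) kk) := by
        funext kk
        split
        · next h => rw [hu1x kk h]; rfl
        · rfl
      rw [hfun]
      have hsingle : u1 ⟨t + (i : ℕ), hidx i⟩ = if i = k then 1 else 0 := by
        rw [hu1, Pi.single_apply]
        congr 1
        simp only [eq_iff_iff]
        constructor
        · intro heq
          have hh := congrArg Fin.val heq
          simp only at hh
          exact Fin.ext (by omega)
        · intro heq; subst heq; rfl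
      rw [hsingle]
      simp [sub_sub]
    have h3 : ∑ i, g i * (eval (Sum.elim (0 : Fin n → K)
        ((L1 : Matrix (Fin m) (Fin m) K).mulVec (0 : Fin m → K) + c1)) (R i)
        - (if i = k then 1 else 0)) = ∑ i, g i * (eval (Sum.elim (0 : Fin n → K)
        ((L1 : Matrix (Fin m) (Fin m) K).mulVec u1 + c1)) (R i)) :=
      Finset.sum_congr rfl fun i _ => by rw [h1' i]
    rw [h1] at h3
    simp only [mul_sub, Finset.sum_sub_distrib, h2, zero_sub, neg_eq_zero] at h3
    simpa using h3
  · -- degree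
    rw [hR]
    refine (totalDegree_sub _ _).trans (max_le ?_ ((tdeg_linW _ _ _).trans one_le_two))
    exact (tdeg_aeval_le _ hσdeg _).trans (hUdeg i)
  · -- vanishing
    intro z
    set v : Fin n → K := (L2 : Matrix (Fin n) (Fin n) K).mulVec z + c2 with hv
    rw [show GpubFun htn Q U (L1 : Matrix (Fin m) (Fin m) K) c1
          (L2 : Matrix (Fin n) (Fin n) K) c2 z
        = (L1 : Matrix (Fin m) (Fin m) K).mulVec (fun j => eval v (Gsecret htn Q U j)) + c1
      from rfl]
    rw [keval]
    rw [sub_eq_zero]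
    have hGs : eval v (Gsecret htn Q U ⟨t + (i : ℕ), hidx i⟩)
        = eval (fun k : Fin n => if h : (k : ℕ) < t then
            v ⟨(k : ℕ), h.trans htn⟩ - eval v (Q ⟨(k : ℕ), h⟩) else v k) (U i) := by
      rw [Gsecret, dif_neg (by simp)]
      have hidx2 : (⟨t + (i : ℕ) - t, by have := i.isLt; omega⟩ :
          Fin (m - t)) = i := Fin.ext (by simp)
      rw [hidx2, substQ]
      rw [show (aeval fun k : Fin n => if hk : (k : ℕ) < t then X k - Q ⟨(k : ℕ), hk⟩ else X k :
        MvPolynomial (Fin n) K →ₐ[K] MvPolynomial (Fin n) K) (U i)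
        = aeval (fun k : Fin n => if hk : (k : ℕ) < t then X k - Q ⟨(k : ℕ), hk⟩ else X k) (U i)
        from rfl]
      rw [eval_aeval']
      have hpt2 : (fun k : Fin n => eval v
            (if hk : (k : ℕ) < t then X k - Q ⟨(k : ℕ), hk⟩ else X k))
          = (fun k : Fin n => if h : (k : ℕ) < t then
            v ⟨(k : ℕ), h.trans htn⟩ - eval v (Q ⟨(k : ℕ), h⟩) else v k) := by
        funext k
        by_cases h : (k : ℕ) < t
        · rw [dif_pos h, dif_pos h]; simp
        · rw [dif_neg h, dif_neg h]; simp
      rw [hpt2]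
    rw [hGs]
    have hpt3 : (fun k : Fin n => if h : (k : ℕ) < t then
          eval v (Gsecret htn Q U ⟨(k : ℕ), h.trans_le htm⟩)
        else ((L2 : Matrix (Fin n) (Fin n) K).mulVec z + c2) k)
        = (fun k : Fin n => if h : (k : ℕ) < t then
          v ⟨(k : ℕ), h.trans htn⟩ - eval v (Q ⟨(k : ℕ), h⟩) else v k) := by
      funext k
      by_cases h : (k : ℕ) < t
      · rw [dif_pos h, dif_pos h]
        rw [Gsecret, dif_pos (show ((⟨(k : ℕ), h.trans_le htm⟩ : Fin m) : ℕ) < t from h)]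
        simp
      · rw [dif_neg h, dif_neg h]
    rw [hpt3]
end

section
/- Let G = (x − 𝔮(y), U(x−𝔮(y), y)) be the secret map. In 𝔽_q[z₁,…,z_n, w₁,…,w_m] (with z_j = x_j for j ≤ t and z_{t+k} = y_k), define R'^{(j)} = w_j − z_j + 𝔮_j(z_{t+1},…,z_n) for j = 1, …, t, and R^{(i)} = U_i(w₁,…,w_t, z_{t+1},…,z_n) − w_{t+i} for i = 1, …, m−t. Then: (a) each R'^{(j)} has total degree at most 2, contains no monomial of the form w_a w_b nor of the form w_a z_b, and satisfies R'^{(j)}(z̄, G(z̄)) = 0 for all z̄ ∈ 𝔽_q^n; (b) the m polynomials R'^{(1)}, …, R'^{(t)}, R^{(1)}, …, R^{(m−t)} are linearly independent over 𝔽_q. -/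
open MvPolynomial

/-- The relation `R^{(i)} = U_i(w_1, …, w_t, z_{t+1}, …, z_n) - w_{t+i}` in the polynomial
ring `K[z_1, …, z_n, w_1, …, w_m]` (with `z`-variables `Sum.inl` and `w`-variables `Sum.inr`). -/
noncomputable def Rrel {K : Type*} [Field K] {n m t : ℕ} (htm : t ≤ m)
    (U : Fin (m - t) → MvPolynomial (Fin n) K) (i : Fin (m - t)) :
    MvPolynomial (Fin n ⊕ Fin m) K :=
  aeval (fun k : Fin n =>
      if hk : (k : ℕ) < t then X (Sum.inr (⟨(k : ℕ), hk.trans_le htm⟩ : Fin m))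
      else X (Sum.inl k)) (U i)
    - X (Sum.inr (⟨t + (i : ℕ), by have := i.isLt; omega⟩ : Fin m))

/-- The relation `R'^{(j)} = w_j - z_j + q_j(z_{t+1}, …, z_n)`. -/
noncomputable def Rrel' {K : Type*} [Field K] {n m t : ℕ} (htn : t < n) (htm : t ≤ m)
    (Q : Fin t → MvPolynomial (Fin n) K) (j : Fin t) :
    MvPolynomial (Fin n ⊕ Fin m) K :=
  X (Sum.inr (Fin.castLE htm j)) - X (Sum.inl (Fin.castLE htn.le j))
    + rename Sum.inl (Q j)

/-!
`R'^{(j)}` is `w_j` minus the polynomial `x_j - 𝔮_j(y)` renamed into the `z`-variables, and that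
polynomial is the `j`-th coordinate of `G`; this gives (a). For (b), read off the coefficients of
the degree-one monomials `w_a`. Those of `R'^{(j)}` are `δ_{aj}`. For `a > t` only `R^{(a-t)}`
has a nonzero one, namely `-1`, because `U_i(w_1, …, w_t, z_{t+1}, …, z_n)` involves no `w_a` with
`a > t`. So the coefficient matrix is block triangular with invertible diagonal blocks.
-/

theorem LinearIndependent.sum_elim_of_map_eq_zero {R M M' ι ι' : Type*} [Ring R]
    [AddCommGroup M] [AddCommGroup M'] [Module R M] [Module R M'] {v : ι → M} {w : ι' → M}
    (hv : LinearIndependent R v) (f : M →ₗ[R] M') (hfv : ∀ i, f (v i) = 0)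
    (hw : LinearIndependent R (f ∘ w)) : LinearIndependent R (Sum.elim v w) :=
  hv.sum_type (hw.of_comp f) <| (Submodule.range_ker_disjoint hw).symm.mono_left <|
    Submodule.span_le.2 <| Set.range_subset_iff.2 hfv

namespace MvPolynomial

variable {R σ τ : Type*}

theorem coeff_rename_eq_zero_of_notMem_range [CommSemiring R] {f : σ → τ}
    (p : MvPolynomial σ R) {d : τ →₀ ℕ} {x : τ} (hx : x ∉ Set.range f) (hd : d x ≠ 0) :
    coeff d (rename f p) = 0 :=
  coeff_rename_eq_zero _ _ _ fun _ hu => absurd (hu ▸ Finsupp.mapDomain_of_notMem_range _ _ hx) hd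

theorem eq_single_of_mem_support_X_sub_rename_inl [CommRing R] (b : τ) (p : MvPolynomial σ R)
    {d : σ ⊕ τ →₀ ℕ} (hd : d ∈ (X (Sum.inr b) - rename Sum.inl p).support) {a : τ}
    (ha : d (Sum.inr a) ≠ 0) : d = Finsupp.single (Sum.inr a) 1 := by
  classical
  have hrename : coeff d (rename Sum.inl p) = 0 :=
    coeff_rename_eq_zero_of_notMem_range p (by simp) ha
  rw [mem_support_iff, coeff_sub, hrename, sub_zero, coeff_X] at hd
  have hdb : Finsupp.single (Sum.inr b) 1 = d := by by_contra h; exact hd (if_neg h)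
  subst hdb
  obtain ⟨hab, -⟩ := Finsupp.single_apply_ne_zero.1 ha
  rw [hab]

variable (R) in
noncomputable def linearCoeffs [CommSemiring R] {ι : Type*} (e : ι → σ) :
    MvPolynomial σ R →ₗ[R] ι → R :=
  LinearMap.pi fun i => lcoeff R (Finsupp.single (e i) 1)

theorem linearCoeffs_apply [CommSemiring R] {ι : Type*} (e : ι → σ) (p : MvPolynomial σ R)
    (i : ι) : linearCoeffs R e p i = coeff (Finsupp.single (e i) 1) p :=
  rfl

end MvPolynomial

section Relations

variable {K : Type*} [Field K] {n m t : ℕ}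

theorem Rrel'_eq (htn : t < n) (htm : t ≤ m) (Q : Fin t → MvPolynomial (Fin n) K) (j : Fin t) :
    Rrel' htn htm Q j =
      X (Sum.inr (Fin.castLE htm j)) - rename Sum.inl (X (Fin.castLE htn.le j) - Q j) := by
  rw [Rrel', map_sub, rename_X]
  ring

def lowVar (htm : t ≤ m) (j : Fin t) : Fin n ⊕ Fin m := Sum.inr (Fin.castLE htm j)

def highVar (htm : t ≤ m) (i : Fin (m - t)) : Fin n ⊕ Fin m :=
  Sum.inr ⟨t + i, by have := i.isLt; omega⟩

def relVar (htm : t ≤ m) (k : Fin n) : Fin n ⊕ Fin m :=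
  if hk : (k : ℕ) < t then Sum.inr ⟨k, hk.trans_le htm⟩ else Sum.inl k

theorem Rrel_eq (htm : t ≤ m) (U : Fin (m - t) → MvPolynomial (Fin n) K) (i : Fin (m - t)) :
    Rrel htm U i = rename (relVar htm) (U i) - X (highVar htm i) := by
  simp only [Rrel, rename_eq_aeval, relVar, highVar, Function.comp_def, apply_dite X]

theorem inr_notMem_range_relVar (htm : t ≤ m) {a : Fin m} (ha : t ≤ (a : ℕ)) :
    Sum.inr a ∉ Set.range (relVar (n := n) htm) := by
  rintro ⟨k, hk⟩
  unfold relVar at hk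
  split_ifs at hk with hkt
  · simp only [Sum.inr.injEq, Fin.ext_iff] at hk
    omega

theorem linearCoeffs_lowVar_Rrel' (htn : t < n) (htm : t ≤ m)
    (Q : Fin t → MvPolynomial (Fin n) K) (j : Fin t) :
    linearCoeffs K (lowVar htm) (Rrel' htn htm Q j) = Pi.single j 1 := by
  classical
  ext j'
  rw [linearCoeffs_apply, Rrel'_eq, coeff_sub,
    coeff_rename_eq_zero_of_notMem_range (x := lowVar htm j') _ (by simp [lowVar])
      (by simp [lowVar]), sub_zero, coeff_X]
  simp [lowVar, Finsupp.single_left_inj, Pi.single_apply, Fin.ext_iff, eq_comm]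

theorem linearCoeffs_highVar_Rrel' (htn : t < n) (htm : t ≤ m)
    (Q : Fin t → MvPolynomial (Fin n) K) (j : Fin t) :
    linearCoeffs K (highVar htm) (Rrel' htn htm Q j) = 0 := by
  classical
  ext i
  rw [linearCoeffs_apply, Rrel'_eq, coeff_sub,
    coeff_rename_eq_zero_of_notMem_range (x := highVar htm i) _ (by simp [highVar])
      (by simp [highVar]), sub_zero, coeff_X]
  simp only [highVar, ne_eq, one_ne_zero, not_false_eq_true, Finsupp.single_left_inj,
    Sum.inr.injEq, Fin.ext_iff, Fin.val_castLE, Pi.zero_apply, ite_eq_right_iff, imp_false]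
  omega

theorem linearCoeffs_highVar_Rrel (htm : t ≤ m) (U : Fin (m - t) → MvPolynomial (Fin n) K)
    (i : Fin (m - t)) :
    linearCoeffs K (highVar htm) (Rrel htm U i) = -Pi.single i 1 := by
  classical
  ext i'
  rw [linearCoeffs_apply, Rrel_eq, coeff_sub,
    coeff_rename_eq_zero_of_notMem_range (x := highVar htm i') _
      (inr_notMem_range_relVar htm (by simp)) (by simp [highVar]), zero_sub, coeff_X]
  simp [highVar, Finsupp.single_left_inj, Pi.single_apply, Fin.ext_iff, eq_comm]

theorem totalDegree_Rrel'_le (htn : t < n) (htm : t ≤ m) {Q : Fin t → MvPolynomial (Fin n) K}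
    {j : Fin t} (hQ : (Q j).totalDegree ≤ 2) : (Rrel' htn htm Q j).totalDegree ≤ 2 := by
  rw [Rrel'_eq]
  refine (totalDegree_sub _ _).trans (max_le (by simp) ?_)
  refine (totalDegree_rename_le _ _).trans <| (totalDegree_sub _ _).trans (max_le ?_ hQ)
  simp

theorem Rrel'_eq_single_of_mem_support (htn : t < n) (htm : t ≤ m)
    (Q : Fin t → MvPolynomial (Fin n) K) (j : Fin t) {d : Fin n ⊕ Fin m →₀ ℕ}
    (hd : d ∈ (Rrel' htn htm Q j).support) {a : Fin m} (ha : d (Sum.inr a) ≠ 0) :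
    d = Finsupp.single (Sum.inr a) 1 :=
  eq_single_of_mem_support_X_sub_rename_inl _ _ (Rrel'_eq htn htm Q j ▸ hd) ha

theorem Gsecret_castLE (htn : t < n) (htm : t ≤ m) (Q : Fin t → MvPolynomial (Fin n) K)
    (U : Fin (m - t) → MvPolynomial (Fin n) K) (j : Fin t) :
    Gsecret htn Q U (Fin.castLE htm j) = X (Fin.castLE htn.le j) - Q j :=
  dif_pos j.isLt

theorem eval_graph_Rrel' (htn : t < n) (htm : t ≤ m) (Q : Fin t → MvPolynomial (Fin n) K)
    (U : Fin (m - t) → MvPolynomial (Fin n) K) (j : Fin t) (z : Fin n → K) :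
    eval (Sum.elim z fun i => eval z (Gsecret htn Q U i)) (Rrel' htn htm Q j) = 0 := by
  rw [Rrel'_eq, map_sub, eval_X, eval_rename, Sum.elim_inr, Sum.elim_comp_inl,
    Gsecret_castLE, sub_self]

theorem linearIndependent_Rrel'_Rrel (htn : t < n) (htm : t ≤ m)
    (Q : Fin t → MvPolynomial (Fin n) K) (U : Fin (m - t) → MvPolynomial (Fin n) K) :
    LinearIndependent K (Sum.elim (Rrel' (m := m) htn htm Q) (Rrel htm U)) := by
  have hlow : LinearIndependent K (Rrel' (m := m) htn htm Q) := by
    refine LinearIndependent.of_comp (linearCoeffs K (lowVar htm)) ?_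
    have hbasis : linearCoeffs K (lowVar htm) ∘ Rrel' htn htm Q = Pi.basisFun K (Fin t) := by
      ext1 j
      simp [linearCoeffs_lowVar_Rrel']
    exact hbasis ▸ (Pi.basisFun K _).linearIndependent
  refine hlow.sum_elim_of_map_eq_zero (-linearCoeffs K (highVar htm))
    (fun j => by simp [linearCoeffs_highVar_Rrel']) ?_
  have hbasis : (-linearCoeffs K (highVar htm)) ∘ Rrel htm U = Pi.basisFun K (Fin (m - t)) := by
    ext1 i
    simp [linearCoeffs_highVar_Rrel]
  exact hbasis ▸ (Pi.basisFun K _).linearIndependent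

end Relations

theorem stmt_13_general {K : Type*} [Field K] {n m t : ℕ}
    (htn : t < n) (htm : t ≤ m)
    (Q : Fin t → MvPolynomial (Fin n) K)
    (hQdeg : ∀ j, (Q j).totalDegree ≤ 2)
    (U : Fin (m - t) → MvPolynomial (Fin n) K) :
    (∀ j : Fin t,
      (Rrel' htn htm Q j).totalDegree ≤ 2 ∧
      (∀ d ∈ (Rrel' htn htm Q j).support, ∀ a : Fin m,
        d (Sum.inr a) ≠ 0 → d = Finsupp.single (Sum.inr a) 1) ∧
      (∀ z : Fin n → K,
        eval (Sum.elim z (fun i => eval z (Gsecret htn Q U i))) (Rrel' htn htm Q j) = 0)) ∧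
    LinearIndependent K (Sum.elim (Rrel' (m := m) htn htm Q) (Rrel htm U)) :=
  ⟨fun j => ⟨totalDegree_Rrel'_le htn htm (hQdeg j),
      fun _ hd _ ha => Rrel'_eq_single_of_mem_support htn htm Q j hd ha,
      eval_graph_Rrel' htn htm Q U j⟩,
    linearIndependent_Rrel'_Rrel htn htm Q U⟩

/-- (a) each `R'^{(j)}` has total degree ≤ 2, contains no monomial of the
form `w_a w_b` nor `w_a z_b` (every monomial involving a `w`-variable is a single `w_a`),
and vanishes at every input/output pair of `G`; (b) the `m` polynomials
`R'^{(1)}, …, R'^{(t)}, R^{(1)}, …, R^{(m-t)}` are linearly independent. -/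
theorem stmt_13 {K : Type*} [Field K] [Fintype K] {n m t : ℕ}
    (ht : 0 < t) (htn : t < n) (htm : t ≤ m)
    (Q : Fin t → MvPolynomial (Fin n) K)
    (hQdeg : ∀ j, (Q j).totalDegree ≤ 2)
    (hQvars : ∀ j, ∀ i ∈ (Q j).vars, t ≤ (i : ℕ))
    (U : Fin (m - t) → MvPolynomial (Fin n) K)
    (hUdeg : ∀ i, (U i).totalDegree ≤ 2) :
    (∀ j : Fin t,
      (Rrel' htn htm Q j).totalDegree ≤ 2 ∧
      (∀ d ∈ (Rrel' htn htm Q j).support, ∀ a : Fin m,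
        d (Sum.inr a) ≠ 0 → d = Finsupp.single (Sum.inr a) 1) ∧
      (∀ z : Fin n → K,
        eval (Sum.elim z (fun i => eval z (Gsecret htn Q U i))) (Rrel' htn htm Q j) = 0)) ∧
    LinearIndependent K (Sum.elim (Rrel' (m := m) htn htm Q) (Rrel htm U)) :=
  stmt_13_general htn htm Q hQdeg U
end

section
/- Let G = (x − 𝔮(y), U(x−𝔮(y), y)) be the secret map and G_pub = A₁ ∘ G ∘ A₂, regarded as a function 𝔽_q^n → 𝔽_q^m. Then there exist m linearly independent polynomials in 𝔽_q[z₁,…,z_n, w₁,…,w_m], each of total degree at most 2 and each vanishing at (z̄, G_pub(z̄)) for every z̄ ∈ 𝔽_q^n, such that at least t of them are of the special form Σ_{1≤j≤k≤n} γ_{jk} z_j z_k + Σ_{j=1}^m δ_j w_j + Σ_{j=1}^n ε_j z_j + ζ, i.e., they contain no monomials of the form w_a w_b or w_a z_b. -/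
/-!
Write `a = A₂ z` and `g = G(a)`, so that on the graph `w = L₁ g + c₁`. The affine forms
`W = L₁⁻¹ (w - c₁)` in the `w`-variables therefore evaluate to `g` on the graph. For `i < t`,
`g_i = a_{x_i} - q_i(a_y)` is a quadratic polynomial in `z` alone, so `W_i - g_i` is a relation
whose only `w`-monomials are linear. For `i ≥ t`, `g_i = U_{i-t}(x - q(y), y)` at `a`, and the
first `t` coordinates `x - q(y)` are exactly `W_{<t}`; substituting `W_k` for them keeps the
relation quadratic. Substituting `z = 0, w ↦ L₁ w + c₁` turns the relations into `w_i - E_i`,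
where `E_i` is constant for `i < t` and only involves `w_{<t}` for `i ≥ t`; such a family is
linearly independent.
-/

open MvPolynomial

/-- A polynomial in `K[z, w]` is of the special form
`∑ γ_{jk} z_j z_k + ∑ δ_j w_j + ∑ ε_j z_j + ζ` iff every monomial in its support involving
a `w`-variable is a single `w_a` (no monomials `w_a w_b` or `w_a z_b`). -/
def specialForm {K : Type*} [Field K] {n m : ℕ} (p : MvPolynomial (Fin n ⊕ Fin m) K) : Prop :=
  ∀ d ∈ p.support, ∀ a : Fin m, d (Sum.inr a) ≠ 0 → d = Finsupp.single (Sum.inr a) 1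

open scoped Matrix

namespace MvPolynomial

section CommSemiring

variable {R : Type*} [CommSemiring R]

theorem eval_aeval {σ τ : Type*} (v : τ → R) (g : σ → MvPolynomial τ R) (p : MvPolynomial σ R) :
    eval v (aeval g p) = eval (fun j => eval v (g j)) p := by
  rw [aeval_eq_bind₁]; exact eval₂Hom_bind₁ _ _ _ _

theorem totalDegree_aeval_le {σ τ : Type*} (f : σ → MvPolynomial τ R)
    (hf : ∀ j, (f j).totalDegree ≤ 1) (p : MvPolynomial σ R) :
    (aeval f p).totalDegree ≤ p.totalDegree := by
  classical
  conv_lhs => rw [p.as_sum, map_sum]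
  refine totalDegree_finsetSum_le fun d hd => (le_totalDegree hd).trans' ?_
  rw [aeval_monomial, Finsupp.prod]
  refine (totalDegree_mul _ _).trans ?_
  rw [algebraMap_eq, totalDegree_C, zero_add]
  refine (totalDegree_finsetProd _ _).trans ?_
  calc ∑ j ∈ d.support, (f j ^ d j).totalDegree
      ≤ ∑ j ∈ d.support, d j * 1 :=
        Finset.sum_le_sum fun j _ => (totalDegree_pow _ _).trans (Nat.mul_le_mul_left _ (hf j))
    _ = d.degree := by simp only [mul_one]; rfl

variable {σ ι κ : Type*}

section affineForm

variable [Fintype κ] (A : Matrix ι κ R) (c : ι → R) (v : κ → MvPolynomial σ R)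

noncomputable def affineForm (i : ι) : MvPolynomial σ R :=
  ∑ k, C (A i k) * v k + C (c i)

theorem eval_affineForm (x : σ → R) (i : ι) :
    eval x (affineForm A c v i) = (A *ᵥ fun k => eval x (v k)) i + c i := by
  simp [affineForm, Matrix.mulVec, dotProduct]

theorem aeval_affineForm {τ : Type*} (f : σ → MvPolynomial τ R) (i : ι) :
    aeval f (affineForm A c v i) = affineForm A c (fun k => aeval f (v k)) i := by
  simp [affineForm]

theorem affineForm_affineForm {μ : Type*} [Fintype μ] (B : Matrix κ μ R) (d : κ → R)
    (u : μ → MvPolynomial σ R) :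
    affineForm A c (affineForm B d u) = affineForm (A * B) (A *ᵥ d + c) u := by
  funext i
  simp only [affineForm, Matrix.mul_apply, Matrix.mulVec, dotProduct, Pi.add_apply, map_add,
    map_sum, map_mul, mul_add, Finset.sum_add_distrib, Finset.mul_sum, Finset.sum_mul]
  rw [Finset.sum_comm]
  simp only [mul_assoc, add_assoc]

theorem affineForm_one_zero [DecidableEq κ] : affineForm (1 : Matrix κ κ R) 0 v = v := by
  funext i
  simp [affineForm, Matrix.one_apply]

theorem totalDegree_affineForm_le (hv : ∀ k, (v k).totalDegree ≤ 1) (i : ι) :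
    (affineForm A c v i).totalDegree ≤ 1 := by
  refine (totalDegree_add _ _).trans (max_le ?_ (by simp))
  refine totalDegree_finsetSum_le fun k _ => (totalDegree_mul _ _).trans ?_
  simpa using hv k

end affineForm

theorem aeval_sumElim_zero_rename_inl {τ ρ : Type*}
    (f : τ → MvPolynomial ρ R) (p : MvPolynomial σ R) :
    aeval (Sum.elim 0 f) (rename Sum.inl p) = C (constantCoeff p) := by
  rw [aeval_rename, Sum.elim_comp_inl, aeval_zero, algebraMap_eq]

end CommSemiring

section CommRing

variable {R : Type*} [CommRing R]

theorem linearIndependent_X_sub_of_vars {ι : Type*} [Fintype ι] (E : ι → MvPolynomial ι R)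
    (P : ι → Prop) (hE : ∀ i k, k ∈ (E i).vars → P k ∧ ¬ P i) :
    LinearIndependent R fun i => X i - E i := by
  classical
  rw [Fintype.linearIndependent_iff]
  intro g hg
  have hcoeff : ∀ k, g k = ∑ i, g i * coeff (Finsupp.single k 1) (E i) := by
    intro k
    have := congrArg (coeff (Finsupp.single k 1)) hg
    simp only [smul_eq_mul, coeff_sum, coeff_smul, coeff_sub, coeff_X, coeff_zero,
      Finsupp.single_left_inj one_ne_zero, mul_sub, Finset.sum_sub_distrib, mul_ite, mul_one,
      mul_zero, Finset.sum_ite_eq', Finset.mem_univ, if_true] at this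
    exact sub_eq_zero.mp this
  have hvar : ∀ i k, coeff (Finsupp.single k 1) (E i) ≠ 0 → P k ∧ ¬ P i := fun i k h =>
    hE i k ((mem_vars_iff_mem_support k).mpr ⟨_, mem_support_iff.mpr h, by simp⟩)
  have hout : ∀ k, ¬ P k → g k = 0 := fun k hk => by
    rw [hcoeff k]
    refine Finset.sum_eq_zero fun i _ => ?_
    by_cases h : coeff (Finsupp.single k 1) (E i) = 0
    · rw [h, mul_zero]
    · exact absurd (hvar i k h).1 hk
  intro k
  by_cases hk : P k
  · rw [hcoeff k]
    refine Finset.sum_eq_zero fun i _ => ?_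
    by_cases h : coeff (Finsupp.single k 1) (E i) = 0
    · rw [h, mul_zero]
    · rw [hout i (hvar i k h).2, zero_mul]
  · exact hout k hk

end CommRing

end MvPolynomial

section specialForm

variable {K : Type*} [Field K] {n m : ℕ}

theorem specialForm_sub {p q : MvPolynomial (Fin n ⊕ Fin m) K} (hp : specialForm p)
    (hq : specialForm q) : specialForm (p - q) := by
  classical
  intro d hd
  rcases Finset.mem_union.mp (support_sub _ p q hd) with h | h
  exacts [hp d h, hq d h]

theorem specialForm_of_totalDegree_le_one {p : MvPolynomial (Fin n ⊕ Fin m) K}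
    (hp : p.totalDegree ≤ 1) : specialForm p := by
  intro d hd a ha
  have hle : Finsupp.single (Sum.inr a) 1 ≤ d :=
    Finsupp.single_le_iff.mpr (Nat.one_le_iff_ne_zero.mpr ha)
  have hrest : (d - Finsupp.single (Sum.inr a) 1).degree = 0 := by
    have hsplit := map_add Finsupp.degree (d - Finsupp.single (Sum.inr a) 1)
      (Finsupp.single (Sum.inr a) 1)
    rw [tsub_add_cancel_of_le hle, Finsupp.degree_single] at hsplit
    have hdeg : d.degree ≤ 1 := (le_totalDegree hd).trans hp
    omega
  rw [Finsupp.degree_eq_zero_iff, tsub_eq_zero_iff_le] at hrest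
  exact le_antisymm hrest hle

theorem specialForm_rename_inl (p : MvPolynomial (Fin n) K) :
    specialForm (rename Sum.inl p : MvPolynomial (Fin n ⊕ Fin m) K) := by
  classical
  intro d hd a ha
  rw [support_rename_of_injective Sum.inl_injective] at hd
  obtain ⟨e, -, rfl⟩ := Finset.mem_image.mp hd
  exact absurd (Finsupp.mapDomain_of_notMem_range _ _ (by simp)) ha

end specialForm

section SecretMap

variable {K : Type*} [Field K] {n m t : ℕ}

theorem eval_substQ (Q : Fin t → MvPolynomial (Fin n) K) (a : Fin n → K)
    (p : MvPolynomial (Fin n) K) :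
    eval a (substQ n t Q p) =
      eval (fun k : Fin n => if hk : (k : ℕ) < t then a k - eval a (Q ⟨k, hk⟩) else a k) p := by
  rw [substQ, eval_aeval]
  congr 2 with k
  split_ifs <;> simp

variable (htn : t < n) (Q : Fin t → MvPolynomial (Fin n) K)
  (U : Fin (m - t) → MvPolynomial (Fin n) K)

theorem Gsecret_of_lt (i : Fin m) (hi : (i : ℕ) < t) :
    Gsecret htn Q U i = X ⟨i, hi.trans htn⟩ - Q ⟨i, hi⟩ :=
  dif_pos hi

theorem Gsecret_of_not_lt (i : Fin m) (hi : ¬(i : ℕ) < t) :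
    Gsecret htn Q U i = substQ n t Q (U ⟨i - t, by omega⟩) :=
  dif_neg hi

end SecretMap

section GraphRelation

variable {K : Type*} [Field K] {n m t : ℕ} (htn : t < n) (htm : t ≤ m) (Q : Fin t → MvPolynomial (Fin n) K)
  (U : Fin (m - t) → MvPolynomial (Fin n) K) (M : Matrix (Fin m) (Fin m) K) (c1 : Fin m → K)
  (L2 : Matrix (Fin n) (Fin n) K) (c2 : Fin n → K)

noncomputable def outputForms : Fin m → MvPolynomial (Fin n ⊕ Fin m) K :=
  affineForm M (-(M *ᵥ c1)) fun k => X (Sum.inr k)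

noncomputable def inputForms : Fin n → MvPolynomial (Fin n) K :=
  affineForm L2 c2 X

-- The argument `(x - q(y), y)` of `U` at `A₂ z`, with `x - q(y)` read off the outputs.
noncomputable def liftedArgs (k : Fin n) : MvPolynomial (Fin n ⊕ Fin m) K :=
  if hk : (k : ℕ) < t then outputForms M c1 ⟨k, hk.trans_le htm⟩
  else rename Sum.inl (inputForms L2 c2 k)

noncomputable def secretComponent (i : Fin m) : MvPolynomial (Fin n ⊕ Fin m) K :=
  if h : (i : ℕ) < t then rename Sum.inl (aeval (inputForms L2 c2) (Gsecret htn Q U i))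
  else aeval (liftedArgs htm M c1 L2 c2) (U ⟨i - t, by omega⟩)

noncomputable def graphRelation (i : Fin m) : MvPolynomial (Fin n ⊕ Fin m) K :=
  outputForms M c1 i - secretComponent htn htm Q U M c1 L2 c2 i

theorem totalDegree_graphRelation_le (hQ : ∀ j, (Q j).totalDegree ≤ 2)
    (hU : ∀ i, (U i).totalDegree ≤ 2) (i : Fin m) :
    (graphRelation htn htm Q U M c1 L2 c2 i).totalDegree ≤ 2 := by
  have houtput : ∀ i, (outputForms (n := n) M c1 i).totalDegree ≤ 1 :=
    totalDegree_affineForm_le _ _ _ fun k => by simp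
  have hinput : ∀ j, (inputForms L2 c2 j).totalDegree ≤ 1 :=
    totalDegree_affineForm_le _ _ _ fun k => by simp
  refine (totalDegree_sub _ _).trans (max_le ((houtput i).trans one_le_two) ?_)
  rw [secretComponent]
  split_ifs with h
  · refine (totalDegree_rename_le _ _).trans ((totalDegree_aeval_le _ hinput _).trans ?_)
    rw [Gsecret_of_lt htn Q U i h]
    exact (totalDegree_sub _ _).trans (max_le (by simp) (hQ _))
  · refine (totalDegree_aeval_le _ (fun k => ?_) _).trans (hU _)
    rw [liftedArgs]
    split_ifs
    exacts [houtput _, (totalDegree_rename_le _ _).trans (hinput k)]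

theorem specialForm_graphRelation (i : Fin m) (hi : (i : ℕ) < t) :
    specialForm (graphRelation htn htm Q U M c1 L2 c2 i) := by
  refine specialForm_sub (specialForm_of_totalDegree_le_one ?_) ?_
  · exact totalDegree_affineForm_le _ _ _ (fun k => by simp) i
  · rw [secretComponent, dif_pos hi]
    exact specialForm_rename_inl _

variable {M} {A1 : Matrix (Fin m) (Fin m) K}

theorem eval_outputForms (hM : M * A1 = 1) (z : Fin n → K) (g : Fin m → K) (i : Fin m) :
    eval (Sum.elim z (A1 *ᵥ g + c1)) (outputForms M c1 i) = g i := by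
  rw [outputForms, eval_affineForm]
  simp only [eval_X, Sum.elim_inr]
  rw [Matrix.mulVec_add, Matrix.mulVec_mulVec, hM, Matrix.one_mulVec]
  simp

theorem eval_inputForms (z : Fin n → K) (k : Fin n) :
    eval z (inputForms L2 c2 k) = (L2 *ᵥ z + c2) k := by
  simp [inputForms, eval_affineForm]

theorem eval_graphRelation (hM : M * A1 = 1) (z : Fin n → K) (i : Fin m) :
    eval (Sum.elim z (GpubFun htn Q U A1 c1 L2 c2 z)) (graphRelation htn htm Q U M c1 L2 c2 i)
      = 0 := by
  set a := L2 *ᵥ z + c2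
  set g : Fin m → K := fun j => eval a (Gsecret htn Q U j)
  change eval (Sum.elim z (A1 *ᵥ g + c1)) _ = 0
  rw [graphRelation, map_sub, eval_outputForms c1 hM, secretComponent, sub_eq_zero]
  split_ifs with hi
  · simp only [eval_rename, Sum.elim_comp_inl, eval_aeval, eval_inputForms, g, a]
  · rw [eval_aeval]
    change eval a (Gsecret htn Q U i) = _
    rw [Gsecret_of_not_lt htn Q U i hi, eval_substQ]
    congr 2 with k
    rw [liftedArgs]
    split_ifs with hk
    · rw [eval_outputForms c1 hM]
      simp [g, Gsecret_of_lt htn Q U ⟨k, hk.trans_le htm⟩ hk]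
    · simp [eval_rename, eval_inputForms, a]

theorem linearIndependent_graphRelation (hM : M * A1 = 1) :
    LinearIndependent K (graphRelation htn htm Q U M c1 L2 c2) := by
  set ψ : MvPolynomial (Fin n ⊕ Fin m) K →ₐ[K] MvPolynomial (Fin m) K :=
    aeval (Sum.elim 0 (affineForm A1 c1 X))
  have houtput : ∀ i, ψ (outputForms M c1 i) = X i := by
    intro i
    simp only [ψ, outputForms, aeval_affineForm, aeval_X, Sum.elim_inr]
    rw [affineForm_affineForm, hM, add_neg_cancel, affineForm_one_zero]
  have hinput : ∀ p, (ψ (rename Sum.inl p)).vars = ∅ := fun p => by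
    rw [aeval_sumElim_zero_rename_inl, vars_C]
  refine LinearIndependent.of_comp ψ.toLinearMap ?_
  have hψ : ψ.toLinearMap ∘ graphRelation htn htm Q U M c1 L2 c2 =
      fun i => X i - ψ (secretComponent htn htm Q U M c1 L2 c2 i) := by
    funext i
    simp [graphRelation, houtput]
  rw [hψ]
  refine linearIndependent_X_sub_of_vars _ (fun k => (k : ℕ) < t) fun i k hk => ?_
  rw [secretComponent] at hk
  split_ifs at hk with hi
  · simp [hinput] at hk
  · refine ⟨?_, hi⟩
    rw [comp_aeval_apply, aeval_eq_bind₁] at hk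
    obtain ⟨j, -, hj⟩ := mem_vars_bind₁ _ _ hk
    rw [liftedArgs] at hj
    split_ifs at hj with hjt
    · rw [houtput, vars_X, Finset.mem_singleton] at hj
      exact hj ▸ hjt
    · simp [hinput] at hj

end GraphRelation

theorem stmt_14_general {K : Type*} [Field K] {n m t : ℕ}
    (htn : t < n) (htm : t ≤ m)
    (Q : Fin t → MvPolynomial (Fin n) K)
    (hQdeg : ∀ j, (Q j).totalDegree ≤ 2)
    (U : Fin (m - t) → MvPolynomial (Fin n) K)
    (hUdeg : ∀ i, (U i).totalDegree ≤ 2)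
    (L1 : GL (Fin m) K) (c1 : Fin m → K)
    (L2 : GL (Fin n) K) (c2 : Fin n → K) :
    ∃ R : Fin m → MvPolynomial (Fin n ⊕ Fin m) K,
      LinearIndependent K R ∧
      (∀ i : Fin m,
        (R i).totalDegree ≤ 2 ∧
        ∀ z : Fin n → K,
          eval (Sum.elim z (GpubFun htn Q U (L1 : Matrix (Fin m) (Fin m) K) c1
            (L2 : Matrix (Fin n) (Fin n) K) c2 z)) (R i) = 0) ∧
      ∃ e : Fin t → Fin m, Function.Injective e ∧ ∀ j : Fin t, specialForm (R (e j)) := by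
  have hL1 : ((L1⁻¹ : GL (Fin m) K) : Matrix (Fin m) (Fin m) K) * L1 = 1 := L1.inv_mul
  refine ⟨graphRelation htn htm Q U _ c1 L2 c2,
    linearIndependent_graphRelation htn htm Q U c1 L2 c2 hL1,
    fun i => ⟨totalDegree_graphRelation_le htn htm Q U _ c1 L2 c2 hQdeg hUdeg i,
      fun z => eval_graphRelation htn htm Q U c1 L2 c2 hL1 z i⟩,
    Fin.castLE htm, Fin.castLE_injective htm,
    fun j => specialForm_graphRelation htn htm Q U _ c1 L2 c2 _ j.isLt⟩

/-- there exist `m` linearly independent polynomials of total degree ≤ 2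
vanishing at every input/output pair of `G_pub`, at least `t` of which are of the special
form containing no monomials `w_a w_b` or `w_a z_b`. -/
theorem stmt_14 {K : Type*} [Field K] [Fintype K] {n m t : ℕ}
    (ht : 0 < t) (htn : t < n) (htm : t ≤ m)
    (Q : Fin t → MvPolynomial (Fin n) K)
    (hQdeg : ∀ j, (Q j).totalDegree ≤ 2)
    (hQvars : ∀ j, ∀ i ∈ (Q j).vars, t ≤ (i : ℕ))
    (U : Fin (m - t) → MvPolynomial (Fin n) K)
    (hUdeg : ∀ i, (U i).totalDegree ≤ 2)
    (L1 : GL (Fin m) K) (c1 : Fin m → K)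
    (L2 : GL (Fin n) K) (c2 : Fin n → K) :
    ∃ R : Fin m → MvPolynomial (Fin n ⊕ Fin m) K,
      LinearIndependent K R ∧
      (∀ i : Fin m,
        (R i).totalDegree ≤ 2 ∧
        ∀ z : Fin n → K,
          eval (Sum.elim z (GpubFun htn Q U (L1 : Matrix (Fin m) (Fin m) K) c1
            (L2 : Matrix (Fin n) (Fin n) K) c2 z)) (R i) = 0) ∧
      ∃ e : Fin t → Fin m, Function.Injective e ∧ ∀ j : Fin t, specialForm (R (e j)) :=
  stmt_14_general htn htm Q hQdeg U hUdeg L1 c1 L2 c2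
end

section
/- Let A₂ be an affine linear bijection of 𝔽_q^n and let g be any 𝔽_q-linear combination of the m−t polynomials (U_i(x−𝔮(y), y)) ∘ A₂, i = 1, …, m−t. Then there exist polynomials v, H₁, …, H_t, all of total degree at most 2, such that g = v + Σ_{j=1}^t H_j · ((x_j − 𝔮_j(y)) ∘ A₂). -/
/-!
Put `z_j = x_j - 𝔮_j(y)`. Every monomial of degree at most 2 in `x, y` becomes, after the
substitution, either a polynomial of degree at most 2 in `y` (when it involves no `x_j`) or
`z_j` times the image of a monomial of degree at most 1, which has degree at most 2. Hence
`U_i(x - 𝔮(y), y)` lies in the `K`-module of sums `v + ∑ H_j z_j` with `v, H_j` of degree at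
most 2, and so does every linear combination of them. An affine change of variables does not
raise total degrees, so applying it to such a decomposition yields one of the required form.
-/

open MvPolynomial

theorem Finsupp.eq_zero_or_single_or_single_add_single {σ : Type*} {d : σ →₀ ℕ}
    (hd : (d.sum fun _ e => e) ≤ 2) :
    d = 0 ∨ (∃ k, d = single k 1) ∨ ∃ k l, d = single k 1 + single l 1 := by
  classical
  have hcard : Multiset.card (toMultiset d) ≤ 2 := (card_toMultiset d).trans_le hd
  rw [← toMultiset_toFinsupp d]
  interval_cases h : Multiset.card (toMultiset d)
  · exact .inl (by simp [Multiset.card_eq_zero.mp h])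
  · obtain ⟨k, hk⟩ := Multiset.card_eq_one.mp h
    exact .inr (.inl ⟨k, by simp [hk]⟩)
  · obtain ⟨k, l, hkl⟩ := Multiset.card_eq_two.mp h
    exact .inr (.inr ⟨k, l, by simp [hkl, Multiset.insert_eq_cons, ← Multiset.singleton_add]⟩)

namespace MvPolynomial

variable {R σ τ ι : Type*} [CommSemiring R]

theorem totalDegree_aeval_le_mul {g : σ → MvPolynomial τ R} {k : ℕ}
    (hg : ∀ i, (g i).totalDegree ≤ k) (f : MvPolynomial σ R) :
    (aeval g f).totalDegree ≤ f.totalDegree * k := by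
  conv_lhs => rw [f.as_sum, map_sum]
  refine (totalDegree_finsetSum _ _).trans (Finset.sup_le fun d hd => ?_)
  rw [aeval_monomial, algebraMap_eq]
  refine (totalDegree_mul _ _).trans ?_
  rw [totalDegree_C, zero_add, Finsupp.prod]
  calc (∏ i ∈ d.support, g i ^ d i).totalDegree
      ≤ ∑ i ∈ d.support, (g i ^ d i).totalDegree := totalDegree_finsetProd _ _
    _ ≤ ∑ i ∈ d.support, d i * k :=
        Finset.sum_le_sum fun i _ => (totalDegree_pow _ _).trans (Nat.mul_le_mul_left _ (hg i))
    _ = (d.sum fun _ e => e) * k := by rw [Finsupp.sum, Finset.sum_mul]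
    _ ≤ f.totalDegree * k := Nat.mul_le_mul_right _ (le_totalDegree hd)

variable [Fintype ι]

def boundedCombinations (D : ℕ) (g : ι → MvPolynomial σ R) : Submodule R (MvPolynomial σ R) where
  carrier := {p | ∃ (v : MvPolynomial σ R) (H : ι → MvPolynomial σ R),
    v.totalDegree ≤ D ∧ (∀ j, (H j).totalDegree ≤ D) ∧ p = v + ∑ j, H j * g j}
  add_mem' := by
    rintro _ _ ⟨v, H, hv, hH, rfl⟩ ⟨v', H', hv', hH', rfl⟩
    refine ⟨v + v', H + H', (totalDegree_add _ _).trans (max_le hv hv'),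
      fun j => (totalDegree_add _ _).trans (max_le (hH j) (hH' j)), ?_⟩
    simp only [Pi.add_apply, add_mul, Finset.sum_add_distrib]
    ring
  zero_mem' := ⟨0, 0, by simp, by simp, by simp⟩
  smul_mem' := by
    rintro a _ ⟨v, H, hv, hH, rfl⟩
    refine ⟨a • v, a • H, (totalDegree_smul_le _ _).trans hv,
      fun j => (totalDegree_smul_le _ _).trans (hH j), ?_⟩
    simp [smul_add, Finset.smul_sum]

variable {D : ℕ} {g : ι → MvPolynomial σ R}

theorem mem_boundedCombinations_of_totalDegree_le {p : MvPolynomial σ R}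
    (hp : p.totalDegree ≤ D) : p ∈ boundedCombinations D g :=
  ⟨p, 0, hp, by simp, by simp⟩

theorem mul_mem_boundedCombinations [DecidableEq ι] {H : MvPolynomial σ R}
    (hH : H.totalDegree ≤ D) (j : ι) : H * g j ∈ boundedCombinations D g :=
  ⟨0, Pi.single j H, by simp, fun i => by rcases eq_or_ne i j with rfl | h <;> simp [*],
    by simp [Pi.single_apply, ite_mul]⟩

end MvPolynomial

section

variable {K : Type*} [Field K] {n t : ℕ}

theorem totalDegree_compAff_le (L : Matrix (Fin n) (Fin n) K) (c : Fin n → K)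
    (f : MvPolynomial (Fin n) K) : (compAff L c f).totalDegree ≤ f.totalDegree := by
  refine (totalDegree_aeval_le_mul (k := 1) (fun i => ?_) f).trans_eq (mul_one _)
  refine (totalDegree_add _ _).trans (max_le ?_ (by simp))
  refine (totalDegree_finsetSum _ _).trans (Finset.sup_le fun j _ => ?_)
  exact (totalDegree_mul _ _).trans (by simp)

variable (htn : t ≤ n) (Q : Fin t → MvPolynomial (Fin n) K)

theorem substQ_X_eq_or (k : Fin n) :
    (∃ j, substQ n t Q (X k) = X (Fin.castLE htn j) - Q j) ∨ substQ n t Q (X k) = X k := by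
  by_cases hk : (k : ℕ) < t
  · exact .inl ⟨⟨k, hk⟩, by simp [substQ, hk]⟩
  · exact .inr (by simp [substQ, hk])

variable {Q} (hQ : ∀ j, (Q j).totalDegree ≤ 2)
include hQ

theorem totalDegree_substQ_X_le (k : Fin n) : (substQ n t Q (X k)).totalDegree ≤ 2 := by
  rw [substQ, aeval_X]
  split_ifs with hk
  · rw [sub_eq_add_neg]
    exact (totalDegree_add _ _).trans
      (max_le ((totalDegree_X _).trans_le one_le_two) ((totalDegree_neg _).trans_le (hQ _)))
  · exact (totalDegree_X _).trans_le one_le_two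

theorem substQ_X_mem_boundedCombinations (k : Fin n) :
    substQ n t Q (X k) ∈ boundedCombinations 2 fun j => X (Fin.castLE htn j) - Q j := by
  classical
  rcases substQ_X_eq_or htn Q k with ⟨j, hj⟩ | hk
  · rw [hj, ← one_mul (X _ - Q j)]
    exact mul_mem_boundedCombinations (by simp) j
  · exact mem_boundedCombinations_of_totalDegree_le (totalDegree_substQ_X_le hQ k)

theorem substQ_X_mul_X_mem_boundedCombinations (k l : Fin n) :
    substQ n t Q (X k * X l) ∈ boundedCombinations 2 fun j => X (Fin.castLE htn j) - Q j := by
  classical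
  rw [map_mul]
  rcases substQ_X_eq_or htn Q k with ⟨j, hj⟩ | hk
  · rw [hj, mul_comm]
    exact mul_mem_boundedCombinations (totalDegree_substQ_X_le hQ l) j
  rcases substQ_X_eq_or htn Q l with ⟨j, hj⟩ | hl
  · rw [hj, hk]
    exact mul_mem_boundedCombinations ((totalDegree_X _).trans_le one_le_two) j
  · rw [hk, hl]
    exact mem_boundedCombinations_of_totalDegree_le
      ((totalDegree_mul _ _).trans (add_le_add (totalDegree_X _).le (totalDegree_X _).le))

theorem substQ_monomial_mem_boundedCombinations (d : Fin n →₀ ℕ) (c : K)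
    (hd : (d.sum fun _ e => e) ≤ 2) :
    substQ n t Q (monomial d c) ∈
      boundedCombinations 2 fun j => X (Fin.castLE htn j) - Q j := by
  rcases Finsupp.eq_zero_or_single_or_single_add_single hd with rfl | ⟨k, rfl⟩ | ⟨k, l, rfl⟩
  · rw [monomial_zero', algHom_C, algebraMap_eq]
    exact mem_boundedCombinations_of_totalDegree_le (by simp)
  · rw [show monomial (Finsupp.single k 1) c = c • X k by simp [X, smul_monomial], map_smul]
    exact Submodule.smul_mem _ _ (substQ_X_mem_boundedCombinations htn hQ k)
  · rw [show monomial (Finsupp.single k 1 + Finsupp.single l 1) c = c • (X k * X l) by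
      simp [X, monomial_mul, smul_monomial], map_smul]
    exact Submodule.smul_mem _ _ (substQ_X_mul_X_mem_boundedCombinations htn hQ k l)

theorem substQ_mem_boundedCombinations {U : MvPolynomial (Fin n) K} (hU : U.totalDegree ≤ 2) :
    substQ n t Q U ∈ boundedCombinations 2 fun j => X (Fin.castLE htn j) - Q j := by
  rw [U.as_sum, map_sum]
  exact Submodule.sum_mem _ fun d hd =>
    substQ_monomial_mem_boundedCombinations htn hQ d _ ((le_totalDegree hd).trans hU)

end

theorem stmt_17_general {K : Type*} [Field K] {n m t : ℕ}
    (htn : t < n)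
    (Q : Fin t → MvPolynomial (Fin n) K)
    (hQdeg : ∀ j, (Q j).totalDegree ≤ 2)
    (U : Fin (m - t) → MvPolynomial (Fin n) K)
    (hUdeg : ∀ i, (U i).totalDegree ≤ 2)
    (L2 : GL (Fin n) K) (c2 : Fin n → K)
    (a : Fin (m - t) → K) :
    ∃ (v : MvPolynomial (Fin n) K) (H : Fin t → MvPolynomial (Fin n) K),
      v.totalDegree ≤ 2 ∧ (∀ j, (H j).totalDegree ≤ 2) ∧
      (∑ i : Fin (m - t), a i •
          compAff (L2 : Matrix (Fin n) (Fin n) K) c2 (substQ n t Q (U i)))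
        = v + ∑ j : Fin t,
            H j * compAff (L2 : Matrix (Fin n) (Fin n) K) c2 (X (Fin.castLE htn.le j) - Q j) := by
  have hmem : ∑ i, a i • substQ n t Q (U i) ∈
      boundedCombinations 2 fun j => X (Fin.castLE htn.le j) - Q j :=
    Submodule.sum_mem _ fun i _ =>
      Submodule.smul_mem _ _ (substQ_mem_boundedCombinations htn.le hQdeg (hUdeg i))
  obtain ⟨v, H, hv, hH, hvH⟩ := hmem
  refine ⟨compAff L2 c2 v, fun j => compAff L2 c2 (H j), (totalDegree_compAff_le _ _ _).trans hv,
    fun j => (totalDegree_compAff_le _ _ _).trans (hH j), ?_⟩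
  set φ : MvPolynomial (Fin n) K →ₐ[K] MvPolynomial (Fin n) K :=
    aeval fun i => (∑ j, C ((L2 : Matrix (Fin n) (Fin n) K) i j) * X j) + C (c2 i)
  have hφ : ∀ f, compAff (L2 : Matrix (Fin n) (Fin n) K) c2 f = φ f := fun _ => rfl
  calc ∑ i, a i • compAff (L2 : Matrix (Fin n) (Fin n) K) c2 (substQ n t Q (U i))
      = φ (∑ i, a i • substQ n t Q (U i)) := by simp only [hφ, map_sum, map_smul]
    _ = _ := by simp only [hvH, map_add, map_sum, map_mul, hφ]

/-- every `K`-linear combination `g` of the polynomials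
`(U_i(x - q(y), y)) ∘ A₂` can be written `g = v + ∑_j H_j ((x_j - q_j(y)) ∘ A₂)`
with `v, H_1, …, H_t` all of total degree at most 2. -/
theorem stmt_17 {K : Type*} [Field K] [Fintype K] {n m t : ℕ}
    (ht : 0 < t) (htn : t < n) (htm : t ≤ m)
    (Q : Fin t → MvPolynomial (Fin n) K)
    (hQdeg : ∀ j, (Q j).totalDegree ≤ 2)
    (hQvars : ∀ j, ∀ i ∈ (Q j).vars, t ≤ (i : ℕ))
    (U : Fin (m - t) → MvPolynomial (Fin n) K)
    (hUdeg : ∀ i, (U i).totalDegree ≤ 2)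
    (L2 : GL (Fin n) K) (c2 : Fin n → K)
    (a : Fin (m - t) → K) :
    ∃ (v : MvPolynomial (Fin n) K) (H : Fin t → MvPolynomial (Fin n) K),
      v.totalDegree ≤ 2 ∧ (∀ j, (H j).totalDegree ≤ 2) ∧
      (∑ i : Fin (m - t), a i •
          compAff (L2 : Matrix (Fin n) (Fin n) K) c2 (substQ n t Q (U i)))
        = v + ∑ j : Fin t,
            H j * compAff (L2 : Matrix (Fin n) (Fin n) K) c2 (X (Fin.castLE htn.le j) - Q j) :=
  stmt_17_general htn Q hQdeg U hUdeg L2 c2 a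
end
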